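/- arXiv:0901.4225 — 7 statements merged into one kernel-verified Lean document; each statement's English description precedes it below -/
import Mathlib

section
/- Let p be a prime, d ≥ 1, and f ∈ ℤ_p[x_1,…,x_d]. For every integer m ≥ 1, the Haar measure of the set {z ∈ ℤ_p^d : f(z) ∈ p^m ℤ_p} equals N_m(f) · p^{−dm}. -/
/-!
Reduction modulo `p^m` in each coordinate is a surjective additive homomorphism
`π : ℤ_p^d → (ℤ/p^mℤ)^d` with measurable fibres (balls of radius `p^{-m}`), and the congruence
set is the preimage under `π` of the zero set of `f mod p^m`. By translation invariance of `μ`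
all `p^{dm}` fibres of `π` have the same measure, hence measure `p^{-dm}` each.
-/

open MeasureTheory
open scoped ENNReal

noncomputable instance (p : ℕ) [Fact p.Prime] : MeasurableSpace ℤ_[p] := borel _
instance (p : ℕ) [Fact p.Prime] : BorelSpace ℤ_[p] := ⟨rfl⟩

/-- `N_m(f)`: the number of solutions of `f ≡ 0` in `(ℤ/p^mℤ)^d`. -/
noncomputable def igusaN (p : ℕ) [Fact p.Prime] (d : ℕ)
    (f : MvPolynomial (Fin d) ℤ_[p]) (m : ℕ) : ℕ :=
  Nat.card {u : Fin d → ZMod (p ^ m) //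
    MvPolynomial.eval u (MvPolynomial.map (PadicInt.toZModPow m) f) = 0}

section FiniteQuotient

variable {G H : Type*} [AddGroup G] [MeasurableSpace G] [MeasurableAdd G]
  {μ : Measure G} [μ.IsAddLeftInvariant] [AddGroup H] {π : G →+ H}

theorem measure_preimage_singleton_eq_of_surjective (hπ : Function.Surjective π) (h : H) :
    μ (π ⁻¹' {h}) = μ (π ⁻¹' {0}) := by
  obtain ⟨g, rfl⟩ := hπ h
  have : π ⁻¹' {π g} = (-g + ·) ⁻¹' (π ⁻¹' {0}) := by
    ext x
    simp only [Set.mem_preimage, Set.mem_singleton_iff, map_add, map_neg]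
    rw [neg_add_eq_zero, eq_comm]
  rw [this, measure_preimage_add]

variable [MeasurableSpace H] [MeasurableSingletonClass H] [Finite H]

theorem measure_preimage_eq_ncard_mul (hπm : Measurable π) (hπ : Function.Surjective π)
    (S : Set H) : μ (π ⁻¹' S) = S.ncard * μ (π ⁻¹' {0}) := by
  have := Fintype.ofFinite H
  classical
  have hsum := sum_measure_preimage_singleton (μ := μ) S.toFinset
    fun h _ => hπm (measurableSet_singleton h)
  rw [Set.coe_toFinset] at hsum
  rw [← hsum, Finset.sum_congr rfl fun h _ => measure_preimage_singleton_eq_of_surjective hπ h,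
    Finset.sum_const, nsmul_eq_mul, Set.ncard_eq_toFinset_card']

theorem measure_preimage_eq_ncard_div [IsProbabilityMeasure μ] (hπm : Measurable π)
    (hπ : Function.Surjective π) (S : Set H) :
    μ (π ⁻¹' S) = S.ncard / Nat.card H := by
  have hcard : (Nat.card H : ℝ≥0∞) * μ (π ⁻¹' {0}) = 1 := by
    rw [← Set.ncard_univ, ← measure_preimage_eq_ncard_mul hπm hπ, Set.preimage_univ,
      measure_univ]
  rw [measure_preimage_eq_ncard_mul hπm hπ, ENNReal.eq_div_iff, mul_left_comm, hcard, mul_one]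
  · exact_mod_cast Nat.card_pos.ne'
  · exact ENNReal.natCast_ne_top _

end FiniteQuotient

namespace PadicInt

variable {p : ℕ} [Fact p.Prime]

theorem toZModPow_preimage_singleton (m : ℕ) (a : ℤ_[p]) :
    toZModPow m ⁻¹' {toZModPow m a} = Metric.closedBall a ((p : ℝ) ^ (-(m : ℤ))) := by
  ext x
  rw [Set.mem_preimage, Set.mem_singleton_iff, Metric.mem_closedBall, dist_eq_norm,
    norm_le_pow_iff_mem_span_pow, ← ker_toZModPow, RingHom.mem_ker, map_sub, sub_eq_zero]

theorem measurable_toZModPow (m : ℕ) : Measurable (toZModPow m : ℤ_[p] → ZMod (p ^ m)) := by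
  have : NeZero (p ^ m) := ⟨pow_ne_zero _ (Nat.Prime.ne_zero Fact.out)⟩
  refine measurable_to_countable' fun a => ?_
  obtain ⟨x, rfl⟩ := ZMod.ringHom_surjective (toZModPow m) a
  rw [toZModPow_preimage_singleton]
  exact measurableSet_closedBall

theorem pow_dvd_iff_toZModPow_eq_zero (m : ℕ) (x : ℤ_[p]) :
    (p : ℤ_[p]) ^ m ∣ x ↔ toZModPow m x = 0 := by
  rw [← Ideal.mem_span_singleton, ← ker_toZModPow, RingHom.mem_ker]

end PadicInt

theorem measure_congruence_set_general (p : ℕ) [Fact p.Prime] (d : ℕ)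
    (f : MvPolynomial (Fin d) ℤ_[p])
    (μ : Measure (Fin d → ℤ_[p])) [μ.IsAddHaarMeasure] (hμ : μ Set.univ = 1)
    (m : ℕ) :
    μ {z : Fin d → ℤ_[p] | (p : ℤ_[p]) ^ m ∣ MvPolynomial.eval z f}
      = igusaN p d f m * ((p : ℝ≥0∞) ^ (d * m))⁻¹ := by
  have : NeZero (p ^ m) := ⟨pow_ne_zero _ (Nat.Prime.ne_zero Fact.out)⟩
  have : IsProbabilityMeasure μ := ⟨hμ⟩
  let π := ((PadicInt.toZModPow (p := p) m).compLeft (Fin d)).toAddMonoidHom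
  have hπm : Measurable π := measurable_pi_lambda _ fun i =>
    (PadicInt.measurable_toZModPow m).comp (measurable_pi_apply i)
  have hπ : Function.Surjective π := (ZMod.ringHom_surjective (PadicInt.toZModPow m)).comp_left
  have hset : {z : Fin d → ℤ_[p] | (p : ℤ_[p]) ^ m ∣ MvPolynomial.eval z f}
      = π ⁻¹' {u | MvPolynomial.eval u (MvPolynomial.map (PadicInt.toZModPow m) f) = 0} := by
    ext z
    exact (PadicInt.pow_dvd_iff_toZModPow_eq_zero m (MvPolynomial.eval z f)).trans
      (by rw [MvPolynomial.map_eval]; rfl)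
  rw [hset, measure_preimage_eq_ncard_div hπm hπ, igusaN, ← Nat.card_coe_set_eq,
    Nat.card_fun, Nat.card_zmod, Nat.card_fin, div_eq_mul_inv, ← pow_mul, mul_comm m d,
    Nat.cast_pow]
  rfl

/-- For every `m ≥ 1`, the Haar measure (normalized so that
`μ(ℤ_p^d) = 1`) of `{z ∈ ℤ_p^d : f(z) ∈ p^m ℤ_p}` equals `N_m(f) · p^{-dm}`. -/
theorem measure_congruence_set (p : ℕ) [Fact p.Prime] (d : ℕ) (hd : 1 ≤ d)
    (f : MvPolynomial (Fin d) ℤ_[p])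
    (μ : Measure (Fin d → ℤ_[p])) [μ.IsAddHaarMeasure] (hμ : μ Set.univ = 1)
    (m : ℕ) (hm : 1 ≤ m) :
    μ {z : Fin d → ℤ_[p] | (p : ℤ_[p]) ^ m ∣ MvPolynomial.eval z f}
      = igusaN p d f m * ((p : ℝ≥0∞) ^ (d * m))⁻¹ :=
  measure_congruence_set_general p d f μ hμ m
end

section
/- Let p be a prime, d ≥ 1, f ∈ ℤ_p[x_1,…,x_d], and s ∈ ℂ with Re(s) > 0. Then the function z ↦ |f(z)|_p^s is integrable on ℤ_p^d with respect to μ, the series ∑_{i=0}^{∞} μ({z ∈ ℤ_p^d : |f(z)|_p = p^{−i}}) · p^{−is} converges absolutely, and ∫_{ℤ_p^d} |f(z)|_p^s dμ(z) = ∑_{i=0}^{∞} μ({z ∈ ℤ_p^d : |f(z)|_p = p^{−i}}) · p^{−is}. -/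
/-!
The integrand `|f|_p^s` has norm at most `1` and is the constant `p^{-is}` on the level set
`{|f|_p = p^{-i}}`. These level sets are pairwise disjoint and cover everything except the zero
set of `f`, where the integrand vanishes because `s ≠ 0`; countable additivity of the integral
turns the integral into the series, which is dominated by the geometric series `∑ (p^{-Re s})^i`.
-/

open MeasureTheory
open scoped ENNReal

namespace Complex

lemma norm_ofReal_cpow_le_one {x : ℝ} (hx₀ : 0 ≤ x) (hx₁ : x ≤ 1) {s : ℂ} (hs : 0 ≤ s.re) :
    ‖(x : ℂ) ^ s‖ ≤ 1 := by
  rcases hx₀.eq_or_lt with rfl | hx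
  · by_cases h : s = 0 <;> simp [h, zero_cpow]
  · rw [norm_cpow_eq_rpow_re_of_pos hx]
    exact Real.rpow_le_one hx₀ hx₁ hs

lemma ofReal_zpow_neg_cpow {b : ℝ} (hb : 0 ≤ b) (i : ℕ) (s : ℂ) :
    ((b ^ (-(i : ℤ)) : ℝ) : ℂ) ^ s = (b : ℂ) ^ (-(i : ℂ) * s) := by
  rw [← Real.rpow_intCast, ← cpow_mul_ofReal_nonneg hb]
  push_cast
  rfl

lemma norm_cpow_neg_natCast_mul {b : ℝ} (hb : 0 < b) (i : ℕ) (s : ℂ) :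
    ‖(b : ℂ) ^ (-(i : ℂ) * s)‖ = (b ^ (-s.re)) ^ i := by
  rw [norm_cpow_eq_rpow_re_of_pos hb, ← Real.rpow_natCast, ← Real.rpow_mul hb.le]
  congr 1
  simp [mul_comm]

lemma summable_norm_mul_cpow_neg_natCast_mul {a : ℕ → ℂ} {C : ℝ} (ha : ∀ i, ‖a i‖ ≤ C)
    {b : ℝ} (hb : 1 < b) {s : ℂ} (hs : 0 < s.re) :
    Summable fun i : ℕ => ‖a i * (b : ℂ) ^ (-(i : ℂ) * s)‖ := by
  have hb₀ : 0 < b := zero_lt_one.trans hb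
  have hr₀ : 0 ≤ b ^ (-s.re) := (Real.rpow_pos_of_pos hb₀ _).le
  have hr₁ : b ^ (-s.re) < 1 := Real.rpow_lt_one_of_one_lt_of_neg hb (neg_neg_of_pos hs)
  refine .of_nonneg_of_le (fun i => norm_nonneg _) (fun i => ?_)
    ((summable_geometric_of_lt_one hr₀ hr₁).mul_left C)
  rw [norm_mul, norm_cpow_neg_natCast_mul hb₀]
  exact mul_le_mul_of_nonneg_right (ha i) (pow_nonneg hr₀ i)

end Complex

namespace PadicInt

variable {p : ℕ} [Fact p.Prime]

lemma exists_norm_eq_zpow_neg_natCast {x : ℤ_[p]} (hx : x ≠ 0) :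
    ∃ i : ℕ, ‖x‖ = (p : ℝ) ^ (-(i : ℤ)) :=
  ⟨x.valuation, norm_eq_zpow_neg_valuation hx⟩

lemma pairwise_disjoint_norm_eq_zpow_neg_natCast {X : Type*} (g : X → ℤ_[p]) :
    Pairwise (Function.onFun Disjoint fun i : ℕ => {z | ‖g z‖ = (p : ℝ) ^ (-(i : ℤ))}) := by
  intro i j hij
  refine Set.disjoint_left.2 fun z hzi hzj => hij ?_
  have hp : (1 : ℝ) < p := Nat.one_lt_cast.2 (Fact.out : p.Prime).one_lt
  have := zpow_right_injective₀ (zero_lt_one.trans hp) hp.ne' (hzi.symm.trans hzj)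
  omega

variable {X : Type*} [MeasurableSpace X] {μ : Measure X} {g : X → ℤ_[p]}

lemma integrable_norm_cpow [IsFiniteMeasure μ] (hg : Measurable g) {s : ℂ} (hs : 0 ≤ s.re) :
    Integrable (fun z => (‖g z‖ : ℂ) ^ s) μ :=
  .mono' (integrable_const 1)
    ((Complex.measurable_ofReal.comp hg.norm).pow_const s).aestronglyMeasurable
    (ae_of_all _ fun _ => Complex.norm_ofReal_cpow_le_one (norm_nonneg _) (norm_le_one _) hs)

theorem integral_norm_cpow_eq_tsum [IsFiniteMeasure μ] (hg : Measurable g) {s : ℂ} (hs₀ : s ≠ 0)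
    (hs : 0 ≤ s.re) :
    ∫ z, (‖g z‖ : ℂ) ^ s ∂μ = ∑' i : ℕ,
      ((μ {z | ‖g z‖ = (p : ℝ) ^ (-(i : ℤ))}).toReal : ℂ) * (p : ℂ) ^ (-(i : ℂ) * s) := by
  set A : ℕ → Set X := fun i => {z | ‖g z‖ = (p : ℝ) ^ (-(i : ℤ))}
  have hA : ∀ i, MeasurableSet (A i) := fun i => hg.norm (measurableSet_singleton _)
  have hcompl : ∀ z ∉ ⋃ i, A i, (‖g z‖ : ℂ) ^ s = 0 := by
    intro z hz
    by_contra h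
    have hgz : g z ≠ 0 := by rintro hgz; simp [hgz, Complex.zero_cpow hs₀] at h
    exact hz (Set.mem_iUnion.2 (exists_norm_eq_zpow_neg_natCast hgz))
  have hlevel : ∀ i, ∫ z in A i, (‖g z‖ : ℂ) ^ s ∂μ
      = ((μ (A i)).toReal : ℂ) * (p : ℂ) ^ (-(i : ℂ) * s) := by
    intro i
    rw [setIntegral_congr_fun (hA i) fun _ (hz : _ = _) => by rw [hz], setIntegral_const,
      Complex.ofReal_zpow_neg_cpow (Nat.cast_nonneg p), Complex.real_smul, Complex.ofReal_natCast]
    rfl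
  rw [← setIntegral_eq_integral_of_forall_compl_eq_zero hcompl,
    integral_iUnion hA (pairwise_disjoint_norm_eq_zpow_neg_natCast g)
      (integrable_norm_cpow hg hs).integrableOn]
  exact tsum_congr hlevel

end PadicInt

theorem igusa_integral_as_series_general (p : ℕ) [Fact p.Prime] (d : ℕ)
    (f : MvPolynomial (Fin d) ℤ_[p])
    (μ : Measure (Fin d → ℤ_[p])) (hμ : μ Set.univ = 1)
    (s : ℂ) (hs : 0 < s.re) :
    Integrable (fun z : Fin d → ℤ_[p] => (‖MvPolynomial.eval z f‖ : ℂ) ^ s) μ ∧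
    Summable (fun i : ℕ =>
      ‖((μ {z : Fin d → ℤ_[p] | ‖MvPolynomial.eval z f‖ = (p : ℝ) ^ (-(i : ℤ))}).toReal : ℂ)
        * (p : ℂ) ^ (-(i : ℂ) * s)‖) ∧
    ∫ z : Fin d → ℤ_[p], (‖MvPolynomial.eval z f‖ : ℂ) ^ s ∂μ
      = ∑' i : ℕ,
          ((μ {z : Fin d → ℤ_[p] | ‖MvPolynomial.eval z f‖ = (p : ℝ) ^ (-(i : ℤ))}).toReal : ℂ)
            * (p : ℂ) ^ (-(i : ℂ) * s) := by
  have : IsProbabilityMeasure μ := ⟨hμ⟩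
  have hf : Measurable fun z => MvPolynomial.eval z f :=
    (MvPolynomial.continuous_eval f).measurable
  have hp : (1 : ℝ) < p := Nat.one_lt_cast.2 (Fact.out : p.Prime).one_lt
  refine ⟨PadicInt.integrable_norm_cpow hf hs.le, ?_,
    PadicInt.integral_norm_cpow_eq_tsum hf (fun h => by simp [h] at hs) hs.le⟩
  simpa only [Complex.ofReal_natCast] using Complex.summable_norm_mul_cpow_neg_natCast_mul
    (C := 1) (fun i => by
      rw [Complex.norm_real, Real.norm_of_nonneg ENNReal.toReal_nonneg]
      exact measureReal_le_one) hp hs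

/-- For `Re(s) > 0`, the function `z ↦ |f(z)|_p^s` is integrable
on `ℤ_p^d` with respect to the normalized Haar measure `μ`, the series
`∑_{i≥0} μ({z : |f(z)|_p = p^{-i}}) p^{-is}` converges absolutely, and the
integral equals the sum of the series.  (Here `0^s = 0` since `s ≠ 0`.) -/
theorem igusa_integral_as_series (p : ℕ) [Fact p.Prime] (d : ℕ) (hd : 1 ≤ d)
    (f : MvPolynomial (Fin d) ℤ_[p])
    (μ : Measure (Fin d → ℤ_[p])) [μ.IsAddHaarMeasure] (hμ : μ Set.univ = 1)
    (s : ℂ) (hs : 0 < s.re) :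
    Integrable (fun z : Fin d → ℤ_[p] => (‖MvPolynomial.eval z f‖ : ℂ) ^ s) μ ∧
    Summable (fun i : ℕ =>
      ‖((μ {z : Fin d → ℤ_[p] | ‖MvPolynomial.eval z f‖ = (p : ℝ) ^ (-(i : ℤ))}).toReal : ℂ)
        * (p : ℂ) ^ (-(i : ℂ) * s)‖) ∧
    ∫ z : Fin d → ℤ_[p], (‖MvPolynomial.eval z f‖ : ℂ) ^ s ∂μ
      = ∑' i : ℕ,
          ((μ {z : Fin d → ℤ_[p] | ‖MvPolynomial.eval z f‖ = (p : ℝ) ^ (-(i : ℤ))}).toReal : ℂ)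
            * (p : ℂ) ^ (-(i : ℂ) * s) :=
  igusa_integral_as_series_general p d f μ hμ s hs
end

section
/- (Transformation formula relating the Igusa Poincaré series and the Igusa zeta function.) Let p be a prime, d ≥ 1, f ∈ ℤ_p[x_1,…,x_d], and s ∈ ℂ with Re(s) > 0. Then the series ∑_{m≥1} N_m(f) · p^{−m(d+s)} converges absolutely and equals (p^{−s}/(1 − p^{−s})) · (1 − ∫_{ℤ_p^d} |f(z)|_p^s dμ(z)). -/
/-!
Let `A_m = {z : |f(z)|_p ≤ p^{-m}}`. Reduction modulo `p^m` is a surjective additive map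
`ℤ_p^d → (ℤ/p^mℤ)^d` whose fibres are translates of one another, hence all of Haar measure
`p^{-md}`; as `A_m` is the preimage of the `N_m(f)` zeros of `f mod p^m`, `μ(A_m) = N_m(f) p^{-md}`.
The function `|f|_p^s` equals `p^{-ms}` exactly on `A_m \ A_{m+1}`, so the zeta integral is
`∑ (μ(A_m) - μ(A_{m+1})) p^{-ms}`, and Abel summation turns this into the Poincaré series.
-/

open MeasureTheory
open scoped ENNReal

theorem one_sub_mul_tsum_succ_mul_pow_succ {𝕜 : Type*} [Field 𝕜] [TopologicalSpace 𝕜]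
    [IsTopologicalRing 𝕜] [T2Space 𝕜] {a : ℕ → 𝕜} {r : 𝕜} (h : Summable fun m => a m * r ^ m) :
    (1 - r) * ∑' m, a (m + 1) * r ^ (m + 1)
      = r * (a 0 - ∑' m, (a m - a (m + 1)) * r ^ m) := by
  have hshift : Summable fun m => a (m + 1) * r ^ (m + 1) :=
    (summable_nat_add_iff (f := fun m => a m * r ^ m) 1).2 h
  have hsplit : ∑' m, a m * r ^ m = a 0 + ∑' m, a (m + 1) * r ^ (m + 1) := by
    simpa using h.tsum_eq_zero_add
  have hdiff : r * ∑' m, (a m - a (m + 1)) * r ^ m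
      = r * ∑' m, a m * r ^ m - ∑' m, a (m + 1) * r ^ (m + 1) := by
    rw [← tsum_mul_left, ← tsum_mul_left, ← (h.mul_left r).tsum_sub hshift]
    congr 1 with m
    ring
  linear_combination r * hsplit + hdiff

theorem card_mul_measure_preimage_of_surjective {G H : Type*} [AddGroup G] [MeasurableSpace G]
    [MeasurableAdd G] {μ : Measure G} [μ.IsAddLeftInvariant] [AddGroup H] [Fintype H]
    (π : G →+ H) (hπ : Function.Surjective π) (hfiber : ∀ h, MeasurableSet (π ⁻¹' {h}))
    (S : Finset H) :
    Fintype.card H * μ (π ⁻¹' S) = S.card * μ Set.univ := by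
  have hfiber_eq : ∀ h, μ (π ⁻¹' {h}) = μ (π ⁻¹' {0}) := by
    intro h
    obtain ⟨g, rfl⟩ := hπ h
    have htranslate : π ⁻¹' {π g} = (fun x => -g + x) ⁻¹' (π ⁻¹' {0}) := by
      ext x
      simp only [Set.mem_preimage, Set.mem_singleton_iff, map_add, map_neg]
      rw [neg_add_eq_zero, eq_comm]
    rw [htranslate, measure_preimage_add]
  have hsum : ∀ T : Finset H, μ (π ⁻¹' T) = T.card * μ (π ⁻¹' {0}) := fun T => by
    rw [← sum_measure_preimage_singleton T fun h _ => hfiber h,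
      Finset.sum_congr rfl fun h _ => hfiber_eq h, Finset.sum_const, nsmul_eq_mul]
  rw [← Set.preimage_univ (f := π), ← Finset.coe_univ, hsum, hsum, Finset.card_univ]
  ring

namespace Complex

theorem norm_natCast_cpow_neg_lt_one {n : ℕ} (hn : 1 < n) {s : ℂ} (hs : 0 < s.re) :
    ‖(n : ℂ) ^ (-s)‖ < 1 := by
  rw [norm_natCast_cpow_of_pos (by omega), neg_re]
  exact Real.rpow_lt_one_of_one_lt_of_neg (mod_cast hn) (neg_neg_of_pos hs)

theorem ofReal_natCast_zpow_neg_cpow (n v : ℕ) (s : ℂ) :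
    (((n : ℝ) ^ (-v : ℤ) : ℝ) : ℂ) ^ s = ((n : ℂ) ^ (-s)) ^ v := by
  have hinv : (((n : ℝ) ^ (-v : ℤ) : ℝ) : ℂ) = (((n ^ v : ℕ) : ℝ) : ℂ)⁻¹ := by
    push_cast
    rw [zpow_neg, zpow_natCast]
  rw [hinv, inv_cpow_ofReal_nonneg (Nat.cast_nonneg _), ← cpow_nat_mul, mul_neg, cpow_neg]
  push_cast
  rw [natCast_cpow_natCast_mul]

theorem natCast_cpow_neg_mul_add {n : ℕ} (hn : n ≠ 0) (k d : ℕ) (s : ℂ) :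
    (n : ℂ) ^ (-(k : ℂ) * ((d : ℂ) + s)) = (((n : ℂ) ^ k) ^ d)⁻¹ * ((n : ℂ) ^ (-s)) ^ k := by
  rw [show -(k : ℂ) * ((d : ℂ) + s) = -((k * d : ℕ) : ℂ) + k * (-s) by push_cast; ring,
    cpow_add _ _ (Nat.cast_ne_zero.2 hn), cpow_neg, cpow_natCast, cpow_nat_mul, pow_mul]

end Complex

namespace PadicInt

variable {p : ℕ} [Fact p.Prime]

theorem norm_le_pow_iff_toZModPow_eq_zero (x : ℤ_[p]) (n : ℕ) :
    ‖x‖ ≤ (p : ℝ) ^ (-n : ℤ) ↔ toZModPow n x = 0 := by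
  rw [norm_le_pow_iff_mem_span_pow, ← ker_toZModPow, RingHom.mem_ker]

theorem continuous_toZModPow (n : ℕ) : Continuous (toZModPow (p := p) n) := by
  refine continuous_of_continuousAt_zero (toZModPow (p := p) n).toAddMonoidHom ?_
  rw [ContinuousAt, map_zero, nhds_discrete (ZMod (p ^ n)), Filter.tendsto_pure]
  have hradius : (0 : ℝ) < p ^ (-n : ℤ) := zpow_pos (mod_cast (Fact.out : p.Prime).pos) _
  filter_upwards [Metric.closedBall_mem_nhds (0 : ℤ_[p]) hradius] with x hx
  rwa [mem_closedBall_zero_iff, norm_le_pow_iff_toZModPow_eq_zero] at hx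

theorem mem_closedBall_sdiff_iff {x : ℤ_[p]} {m : ℕ} :
    x ∈ Metric.closedBall 0 ((p : ℝ) ^ (-m : ℤ)) \
        Metric.closedBall 0 ((p : ℝ) ^ (-(m + 1 : ℕ) : ℤ)) ↔ x ≠ 0 ∧ x.valuation = m := by
  by_cases hx : x = 0
  · simp only [hx, Set.mem_sdiff, Metric.mem_closedBall, dist_self, ne_eq, not_true_eq_false,
      false_and, iff_false, not_and, not_not]
    exact fun _ => by positivity
  · simp only [Set.mem_sdiff, mem_closedBall_zero_iff, norm_le_pow_iff_le_valuation x hx, ne_eq,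
      hx, not_false_eq_true, true_and]
    omega

theorem ofReal_norm_cpow_eq_tsum_indicator (x : ℤ_[p]) {s : ℂ} (hs : s ≠ 0) :
    (‖x‖ : ℂ) ^ s = ∑' m : ℕ, (Metric.closedBall 0 ((p : ℝ) ^ (-m : ℤ)) \
        Metric.closedBall 0 ((p : ℝ) ^ (-(m + 1 : ℕ) : ℤ))).indicator
        (fun _ => ((p : ℂ) ^ (-s)) ^ m) x := by
  by_cases hx : x = 0
  · rw [hx, norm_zero, Complex.ofReal_zero, Complex.zero_cpow hs, tsum_congr fun m =>
      Set.indicator_of_notMem (fun h => (mem_closedBall_sdiff_iff.1 h).1 rfl) _, tsum_zero]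
  · rw [tsum_eq_single x.valuation fun m hm => Set.indicator_of_notMem
        (fun h => hm (mem_closedBall_sdiff_iff.1 h).2.symm) _,
      Set.indicator_of_mem (mem_closedBall_sdiff_iff.2 ⟨hx, rfl⟩),
      norm_eq_zpow_neg_valuation hx, Complex.ofReal_natCast_zpow_neg_cpow]

theorem integral_norm_cpow_eq_tsum_s3 {X : Type*} [MeasurableSpace X] {μ : Measure X}
    [IsFiniteMeasure μ] {g : X → ℤ_[p]} (hg : Measurable g) {s : ℂ} (hs : 0 < s.re) :
    ∫ x, (‖g x‖ : ℂ) ^ s ∂μ = ∑' m : ℕ,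
      (μ.real (g ⁻¹' Metric.closedBall 0 ((p : ℝ) ^ (-m : ℤ)))
        - μ.real (g ⁻¹' Metric.closedBall 0 ((p : ℝ) ^ (-(m + 1 : ℕ) : ℤ))))
        * ((p : ℂ) ^ (-s)) ^ m := by
  set r : ℂ := (p : ℂ) ^ (-s)
  set B : ℕ → Set ℤ_[p] := fun m => Metric.closedBall 0 ((p : ℝ) ^ (-m : ℤ))
  have hBmeas : ∀ m, MeasurableSet (g ⁻¹' (B m \ B (m + 1))) := fun m =>
    hg (measurableSet_closedBall.diff measurableSet_closedBall)
  have hBanti : ∀ m, B (m + 1) ⊆ B m := fun m =>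
    Metric.closedBall_subset_closedBall
      (zpow_le_zpow_right₀ (mod_cast (Fact.out : p.Prime).one_le) (by omega))
  set F : ℕ → X → ℂ := fun m => (g ⁻¹' (B m \ B (m + 1))).indicator fun _ => r ^ m
  have hF : ∀ x, (‖g x‖ : ℂ) ^ s = ∑' m, F m x := fun x =>
    ofReal_norm_cpow_eq_tsum_indicator (g x) (fun h => by simp [h] at hs)
  have hFint : ∀ m, ∫ x, F m x ∂μ = μ.real (g ⁻¹' (B m \ B (m + 1))) * r ^ m := fun m => by
    rw [integral_indicator_const _ (hBmeas m), Complex.real_smul]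
  have hFnorm : ∀ m, ∫ x, ‖F m x‖ ∂μ ≤ μ.real Set.univ * ‖r‖ ^ m := fun m => by
    simp_rw [F, norm_indicator_eq_indicator_norm]
    rw [integral_indicator_const _ (hBmeas m), smul_eq_mul, norm_pow]
    gcongr
    · exact measure_ne_top μ _
    · exact Set.subset_univ _
  have hsum : Summable fun m => ∫ x, ‖F m x‖ ∂μ :=
    ((summable_geometric_of_lt_one (norm_nonneg r) (Complex.norm_natCast_cpow_neg_lt_one
      (Fact.out : p.Prime).one_lt hs)).mul_left _).of_nonneg_of_le
      (fun m => integral_nonneg fun x => norm_nonneg _) hFnorm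
  rw [integral_congr_ae (ae_of_all _ hF), ← integral_tsum_of_summable_integral_norm
    (fun m => (integrable_const _).indicator (hBmeas m)) hsum]
  refine tsum_congr fun m => ?_
  rw [hFint, Set.preimage_sdiff, measureReal_sdiff (Set.preimage_mono (hBanti m))
    (hg measurableSet_closedBall), Complex.ofReal_sub, sub_mul]

end PadicInt

theorem igusaN_eq_pow_pow_mul_measureReal {p : ℕ} [Fact p.Prime] {d : ℕ}
    (f : MvPolynomial (Fin d) ℤ_[p]) {μ : Measure (Fin d → ℤ_[p])} [μ.IsAddLeftInvariant]
    (hμ : μ Set.univ = 1) (m : ℕ) :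
    (igusaN p d f m : ℝ) = ((p : ℝ) ^ m) ^ d
        * μ.real ((MvPolynomial.eval · f) ⁻¹' Metric.closedBall 0 ((p : ℝ) ^ (-m : ℤ))) := by
  classical
  have : NeZero (p ^ m) := ⟨pow_ne_zero m (Fact.out : p.Prime).ne_zero⟩
  set π := (PadicInt.toZModPow (p := p) m).toAddMonoidHom.compLeft (Fin d)
  have hπ : Function.Surjective π :=
    (ZMod.ringHom_surjective (PadicInt.toZModPow m)).comp_left
  have hfiber : ∀ u, MeasurableSet (π ⁻¹' {u}) := fun u =>
    ((continuous_pi fun i => (PadicInt.continuous_toZModPow m).comp (continuous_apply i))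
      |>.isOpen_preimage _ (isOpen_discrete _)).measurableSet
  set V := Finset.univ.filter fun u : Fin d → ZMod (p ^ m) =>
    MvPolynomial.eval u (MvPolynomial.map (PadicInt.toZModPow m) f) = 0
  have hlevel :
      (MvPolynomial.eval · f) ⁻¹' Metric.closedBall 0 ((p : ℝ) ^ (-m : ℤ)) = π ⁻¹' V := by
    ext z
    rw [Set.mem_preimage, mem_closedBall_zero_iff, PadicInt.norm_le_pow_iff_toZModPow_eq_zero,
      MvPolynomial.map_eval, Set.mem_preimage, Finset.coe_filter, Set.mem_ofPred_eq,
      and_iff_right (Finset.mem_univ _)]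
    rfl
  have hcount := card_mul_measure_preimage_of_surjective (μ := μ) π hπ hfiber V
  rw [Fintype.card_fun, ZMod.card, Fintype.card_fin, hμ, mul_one] at hcount
  rw [hlevel, igusaN, Nat.card_eq_fintype_card, Fintype.card_subtype, measureReal_def]
  have := congrArg ENNReal.toReal hcount
  simp only [ENNReal.toReal_mul, ENNReal.toReal_pow, ENNReal.toReal_natCast, Nat.cast_pow] at this
  exact this.symm

theorem poincare_zeta_transformation_general (p : ℕ) [Fact p.Prime] (d : ℕ)
    (f : MvPolynomial (Fin d) ℤ_[p])
    (μ : Measure (Fin d → ℤ_[p])) [μ.IsAddHaarMeasure] (hμ : μ Set.univ = 1)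
    (s : ℂ) (hs : 0 < s.re) :
    Summable (fun m : ℕ =>
      ‖(igusaN p d f (m + 1) : ℂ) * (p : ℂ) ^ (-((m : ℂ) + 1) * ((d : ℂ) + s))‖) ∧
    ∑' m : ℕ, (igusaN p d f (m + 1) : ℂ) * (p : ℂ) ^ (-((m : ℂ) + 1) * ((d : ℂ) + s))
      = (p : ℂ) ^ (-s) / (1 - (p : ℂ) ^ (-s))
          * (1 - ∫ z : Fin d → ℤ_[p], (‖MvPolynomial.eval z f‖ : ℂ) ^ s ∂μ) := by
  have : IsProbabilityMeasure μ := ⟨hμ⟩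
  have hp : p ≠ 0 := (Fact.out : p.Prime).ne_zero
  set r : ℂ := (p : ℂ) ^ (-s)
  set a : ℕ → ℝ := fun m =>
    μ.real ((MvPolynomial.eval · f) ⁻¹' Metric.closedBall 0 ((p : ℝ) ^ (-m : ℤ)))
  have hr : ‖r‖ < 1 := Complex.norm_natCast_cpow_neg_lt_one (Fact.out : p.Prime).one_lt hs
  have ha0 : a 0 = 1 := by simp [a, Metric.closedBall, PadicInt.norm_le_one]
  have hterm : ∀ m : ℕ, (igusaN p d f (m + 1) : ℂ) * (p : ℂ) ^ (-((m : ℂ) + 1) * ((d : ℂ) + s))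
      = a (m + 1) * r ^ (m + 1) := fun m => by
    rw [← Complex.ofReal_natCast, igusaN_eq_pow_pow_mul_measureReal f hμ (m + 1),
      show (m : ℂ) + 1 = ((m + 1 : ℕ) : ℂ) by push_cast; rfl,
      Complex.natCast_cpow_neg_mul_add hp]
    simp only [Complex.ofReal_mul, Complex.ofReal_pow, Complex.ofReal_natCast]
    field_simp
    rfl
  have hsummable : Summable fun m => ‖(a m : ℂ) * r ^ m‖ := by
    refine (summable_geometric_of_lt_one (norm_nonneg r) hr).of_nonneg_of_le
      (fun m => norm_nonneg _) fun m => ?_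
    rw [norm_mul, norm_pow, Complex.norm_real, Real.norm_of_nonneg measureReal_nonneg]
    exact mul_le_of_le_one_left (by positivity) measureReal_le_one
  refine ⟨?_, ?_⟩
  · simp_rw [hterm]
    exact (summable_nat_add_iff (f := fun m => ‖(a m : ℂ) * r ^ m‖) 1).2 hsummable
  · have h1r : 1 - r ≠ 0 := fun h => by simp [← sub_eq_zero.1 h] at hr
    have habel := one_sub_mul_tsum_succ_mul_pow_succ hsummable.of_norm
    rw [ha0, Complex.ofReal_one] at habel
    rw [tsum_congr hterm,
      PadicInt.integral_norm_cpow_eq_tsum_s3 (MvPolynomial.continuous_eval f).measurable hs]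
    field_simp
    linear_combination habel

/-- (Transformation formula.)  For `Re(s) > 0`, the series
`∑_{m≥1} N_m(f) p^{-m(d+s)}` converges absolutely and equals
`p^{-s}/(1-p^{-s}) · (1 - ∫_{ℤ_p^d} |f(z)|_p^s dμ(z))`, where `μ` is the Haar
measure normalized by `μ(ℤ_p^d) = 1`. -/
theorem poincare_zeta_transformation (p : ℕ) [Fact p.Prime] (d : ℕ) (hd : 1 ≤ d)
    (f : MvPolynomial (Fin d) ℤ_[p])
    (μ : Measure (Fin d → ℤ_[p])) [μ.IsAddHaarMeasure] (hμ : μ Set.univ = 1)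
    (s : ℂ) (hs : 0 < s.re) :
    Summable (fun m : ℕ =>
      ‖(igusaN p d f (m + 1) : ℂ) * (p : ℂ) ^ (-((m : ℂ) + 1) * ((d : ℂ) + s))‖) ∧
    ∑' m : ℕ, (igusaN p d f (m + 1) : ℂ) * (p : ℂ) ^ (-((m : ℂ) + 1) * ((d : ℂ) + s))
      = (p : ℂ) ^ (-s) / (1 - (p : ℂ) ^ (-s))
          * (1 - ∫ z : Fin d → ℤ_[p], (‖MvPolynomial.eval z f‖ : ℂ) ^ s ∂μ) :=
  poincare_zeta_transformation_general p d f μ hμ s hs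
end

section
/- Let p be a prime, d ≥ 1, and f ∈ ℤ_p[x_1,…,x_d], and suppose the reduction f̄ ∈ F_p[x_1,…,x_d] defines a smooth hypersurface. Then for every integer m ≥ 1 one has N_m(f) = N_1(f) · p^{(d−1)(m−1)}, where N_1(f) is the number of F_p-rational points of the hypersurface f̄ = 0 in F_p^d. -/
/-- The reduction `f̄ ∈ F_p[x_1,…,x_d]` of `f` modulo `p` defines a smooth
hypersurface: `f̄ ≠ 0` and at every `F_p`-point of `f̄ = 0` some partial
derivative of `f̄` does not vanish. -/
def SmoothModP (p : ℕ) [Fact p.Prime] (d : ℕ) (f : MvPolynomial (Fin d) ℤ_[p]) : Prop :=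
  MvPolynomial.map (PadicInt.toZMod) f ≠ 0 ∧
    ∀ a : Fin d → ZMod p,
      MvPolynomial.eval a (MvPolynomial.map (PadicInt.toZMod) f) = 0 →
        ∃ i : Fin d,
          MvPolynomial.eval a (MvPolynomial.pderiv i (MvPolynomial.map (PadicInt.toZMod) f)) ≠ 0

open MvPolynomial Module

theorem Module.Dual.natCard_preimage_singleton {K V : Type*} [Field K] [Finite K]
    [AddCommGroup V] [Module K V] [FiniteDimensional K V] {f : Dual K V} (hf : f ≠ 0) (x : K) :
    Nat.card (f ⁻¹' {x}) = Nat.card K ^ (finrank K V - 1) := by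
  rw [← Dual.finrank_ker_add_one_of_ne_zero hf, Nat.add_sub_cancel, ← natCard_eq_pow_finrank]
  exact Nat.card_congr (f.toAddMonoidHom.fiberEquivKerOfSurjective (LinearMap.surjective hf) x)

theorem natCard_add_dotProduct_eq_zero {K σ : Type*} [Field K] [Finite K] [Fintype σ]
    {g : σ → K} (hg : g ≠ 0) (c : K) :
    Nat.card {v : σ → K // c + g ⬝ᵥ v = 0} = Nat.card K ^ (Fintype.card σ - 1) := by
  classical
  have hφ : dotProductEquiv K σ g ≠ 0 := (LinearEquiv.map_ne_zero_iff _).mpr hg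
  rw [← finrank_fintype_fun_eq_card K, ← Dual.natCard_preimage_singleton hφ (-c)]
  exact Nat.card_congr (Equiv.subtypeEquivRight fun v ↦ by simp [add_eq_zero_iff_neg_eq, eq_comm])

namespace MvPolynomial

variable {σ R : Type*}

def NonsingularAtZeros [CommSemiring R] (G : MvPolynomial σ R) : Prop :=
  ∀ a : σ → R, eval a G = 0 → ∃ i, eval a (pderiv i G) ≠ 0

theorem eval_add_of_mul_eq_zero [CommRing R] [Fintype σ] (g : MvPolynomial σ R) (a b : σ → R)
    (hb : ∀ i j, b i * b j = 0) :
    eval (a + b) g = eval a g + ∑ i, eval a (pderiv i g) * b i := by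
  classical
  induction g using MvPolynomial.induction_on with
  | C c => simp
  | add q r hq hr => simp only [map_add, hq, hr, add_mul, Finset.sum_add_distrib]; ring
  | mul_X q i hq =>
    have hquad : (∑ j, eval a (pderiv j q) * b j) * b i = 0 := by
      simp only [Finset.sum_mul, mul_assoc, hb, mul_zero, Finset.sum_const_zero]
    simp only [map_mul, eval_X, Pi.add_apply, hq, Derivation.leibniz, pderiv_X, Pi.single_apply,
      smul_eq_mul, map_add, add_mul, Finset.sum_add_distrib, mul_ite, mul_one, mul_zero,
      apply_ite (eval a), map_zero, ite_mul, zero_mul, Finset.sum_ite_eq, Finset.mem_univ,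
      if_true, mul_assoc, ← Finset.mul_sum]
    linear_combination hquad

end MvPolynomial

namespace ZMod

section

variable (p m : ℕ)

abbrev powSuccToPow : ZMod (p ^ (m + 1)) →+* ZMod (p ^ m) :=
  castHom (pow_dvd_pow p m.le_succ) _

abbrev powSuccToSelf : ZMod (p ^ (m + 1)) →+* ZMod p :=
  castHom (dvd_pow_self p m.succ_ne_zero) _

/-- `c ↦ p ^ m * c`, identifying `ZMod p` with the kernel of `powSuccToPow p m`. -/
def mulPowHom : ZMod p →+ ZMod (p ^ (m + 1)) :=
  lift p ⟨zmultiplesHom _ ((p : ZMod (p ^ (m + 1))) ^ m), by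
    rw [zmultiplesHom_apply, natCast_zsmul, nsmul_eq_mul, ← pow_succ', ← Nat.cast_pow,
      natCast_self]⟩

end

variable {p m : ℕ}

theorem mulPowHom_intCast (k : ℤ) : mulPowHom p m k = (p : ZMod (p ^ (m + 1))) ^ m * k := by
  simp [mulPowHom, mul_comm]

theorem mulPowHom_powSuccToSelf (x : ZMod (p ^ (m + 1))) :
    mulPowHom p m (powSuccToSelf p m x) = p ^ m * x := by
  obtain ⟨k, rfl⟩ := intCast_surjective x
  rw [map_intCast, mulPowHom_intCast]

theorem mul_mulPowHom (x : ZMod (p ^ (m + 1))) (c : ZMod p) :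
    x * mulPowHom p m c = mulPowHom p m (powSuccToSelf p m x * c) := by
  obtain ⟨y, rfl⟩ := castHom_surjective (dvd_pow_self p m.succ_ne_zero) c
  rw [← map_mul, mulPowHom_powSuccToSelf, mulPowHom_powSuccToSelf]
  ring

theorem powSuccToSelf_mulPowHom (hm : m ≠ 0) (c : ZMod p) :
    powSuccToSelf p m (mulPowHom p m c) = 0 := by
  obtain ⟨k, rfl⟩ := intCast_surjective c
  simp [mulPowHom_intCast, hm]

theorem mulPowHom_mul_mulPowHom (hm : m ≠ 0) (a b : ZMod p) :
    mulPowHom p m a * mulPowHom p m b = 0 := by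
  rw [mul_mulPowHom, powSuccToSelf_mulPowHom hm, zero_mul, map_zero]

theorem mulPowHom_injective [NeZero p] : Function.Injective (mulPowHom p m) := by
  refine (injective_iff_map_eq_zero _).mpr fun c hc ↦ ?_
  obtain ⟨k, rfl⟩ := intCast_surjective c
  rw [mulPowHom_intCast, ← Nat.cast_pow, ← Int.cast_natCast, ← Int.cast_mul,
    intCast_zmod_eq_zero_iff_dvd, pow_succ, Nat.cast_mul] at hc
  rw [intCast_zmod_eq_zero_iff_dvd]
  exact Int.dvd_of_mul_dvd_mul_left (by simp [NeZero.ne p]) hc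

theorem powSuccToPow_eq_zero_iff (x : ZMod (p ^ (m + 1))) :
    powSuccToPow p m x = 0 ↔ ∃ c, mulPowHom p m c = x := by
  constructor
  · intro h
    obtain ⟨k, rfl⟩ := intCast_surjective x
    rw [map_intCast, intCast_zmod_eq_zero_iff_dvd] at h
    obtain ⟨l, rfl⟩ := h
    exact ⟨l, by simp [mulPowHom_intCast]⟩
  · rintro ⟨c, rfl⟩
    obtain ⟨l, rfl⟩ := intCast_surjective c
    rw [mulPowHom_intCast, map_mul, map_pow, map_natCast, ← Nat.cast_pow, natCast_self,
      zero_mul]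

variable {σ : Type*}

noncomputable def liftsEquiv [NeZero p] (w₀ : σ → ZMod (p ^ (m + 1))) :
    (σ → ZMod p) ≃ {w // powSuccToPow p m ∘ w = powSuccToPow p m ∘ w₀} :=
  Equiv.ofBijective
    (fun v ↦ ⟨w₀ + mulPowHom p m ∘ v, by
      ext i
      change powSuccToPow p m (w₀ i + mulPowHom p m (v i)) = powSuccToPow p m (w₀ i)
      rw [map_add, (powSuccToPow_eq_zero_iff _).mpr ⟨v i, rfl⟩, add_zero]⟩)
    ⟨fun v v' h ↦ by
      ext i
      exact mulPowHom_injective (by simpa using congrFun (congrArg Subtype.val h) i),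
    fun w ↦ by
      have hker (i : σ) : ∃ c, mulPowHom p m c = w.1 i - w₀ i := by
        rw [← powSuccToPow_eq_zero_iff, map_sub, sub_eq_zero]
        exact congrFun w.2 i
      choose v hv using hker
      exact ⟨v, Subtype.ext <| funext fun i ↦ by simp [hv]⟩⟩

variable [Fintype σ]

theorem eval_add_mulPowHom (hm : m ≠ 0) (F : MvPolynomial σ (ZMod (p ^ (m + 1))))
    (w : σ → ZMod (p ^ (m + 1))) (v : σ → ZMod p) :
    eval (w + mulPowHom p m ∘ v) F = eval w F + mulPowHom p m
      ((fun i ↦ eval (powSuccToSelf p m ∘ w) (pderiv i (map (powSuccToSelf p m) F)))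
        ⬝ᵥ v) := by
  rw [eval_add_of_mul_eq_zero F w (mulPowHom p m ∘ v) fun i j ↦ mulPowHom_mul_mulPowHom hm _ _,
    dotProduct, map_sum]
  simp only [Function.comp_apply, mul_mulPowHom, map_eval, pderiv_map]

variable [Fact p.Prime]

theorem natCard_zeros_fiber (hm : m ≠ 0) {F : MvPolynomial σ (ZMod (p ^ (m + 1)))}
    (hF : (map (powSuccToSelf p m) F).NonsingularAtZeros) (w₀ : σ → ZMod (p ^ (m + 1)))
    (hw₀ : eval (powSuccToPow p m ∘ w₀) (map (powSuccToPow p m) F) = 0) :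
    Nat.card {w // powSuccToPow p m ∘ w = powSuccToPow p m ∘ w₀ ∧ eval w F = 0} =
      p ^ (Fintype.card σ - 1) := by
  obtain ⟨c, hc⟩ := (powSuccToPow_eq_zero_iff (eval w₀ F)).mp (by rwa [map_eval])
  set g := fun i ↦ eval (powSuccToSelf p m ∘ w₀) (pderiv i (map (powSuccToSelf p m) F))
  have hg : g ≠ 0 := by
    obtain ⟨i, hi⟩ := hF (powSuccToSelf p m ∘ w₀) (by
      rw [← map_eval, ← hc, powSuccToSelf_mulPowHom hm])
    exact fun h ↦ hi (congrFun h i)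
  have hzero (v : σ → ZMod p) :
      eval (w₀ + mulPowHom p m ∘ v) F = 0 ↔ c + g ⬝ᵥ v = 0 := by
    rw [eval_add_mulPowHom hm, ← hc, ← map_add, map_eq_zero_iff _ mulPowHom_injective]
  rw [← Nat.card_congr ((Equiv.subtypeEquiv (liftsEquiv w₀) fun v ↦ (hzero v).symm).trans
    (Equiv.subtypeSubtypeEquivSubtypeInter _ _)), natCard_add_dotProduct_eq_zero hg c,
    Nat.card_zmod]

theorem natCard_zeros_succ (hm : m ≠ 0) {F : MvPolynomial σ (ZMod (p ^ (m + 1)))}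
    (hF : (map (powSuccToSelf p m) F).NonsingularAtZeros) :
    Nat.card {w // eval w F = 0} =
      Nat.card {u // eval u (map (powSuccToPow p m) F) = 0} * p ^ (Fintype.card σ - 1) := by
  classical
  let reduce (w : {w // eval w F = 0}) : {u // eval u (map (powSuccToPow p m) F) = 0} :=
    ⟨powSuccToPow p m ∘ w.1, by rw [← map_eval, w.2, map_zero]⟩
  have hfiber (u : {u // eval u (map (powSuccToPow p m) F) = 0}) :
      Nat.card {w // reduce w = u} = p ^ (Fintype.card σ - 1) := by
    obtain ⟨w₀, hw₀⟩ : ∃ w₀, powSuccToPow p m ∘ w₀ = u.1 :=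
      (castHom_surjective _).comp_left u.1
    rw [← natCard_zeros_fiber hm hF w₀ (hw₀ ▸ u.2), hw₀]
    exact Nat.card_congr <| (Equiv.subtypeEquivRight fun w ↦ Subtype.ext_iff).trans <|
      (Equiv.subtypeSubtypeEquivSubtypeInter _ (powSuccToPow p m ∘ · = u.1)).trans <|
        Equiv.subtypeEquivRight fun _ ↦ and_comm
  rw [Nat.card_congr (Equiv.sigmaFiberEquiv reduce).symm, Nat.card_sigma,
    Finset.sum_const_nat fun u _ ↦ hfiber u, Finset.card_univ, Nat.card_eq_fintype_card]

end ZMod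

theorem PadicInt.ringHom_eq_toZMod {p : ℕ} [Fact p.Prime] (f : ℤ_[p] →+* ZMod p) :
    f = toZMod :=
  ZMod.ringHom_eq_of_ker_eq _ _ <| by
    rw [ker_toZMod]
    exact IsLocalRing.eq_maximalIdeal <|
      RingHom.ker_isMaximal_of_surjective f (ZMod.ringHom_surjective f)

theorem igusaN_succ {p : ℕ} [Fact p.Prime] {d : ℕ} {f : MvPolynomial (Fin d) ℤ_[p]}
    (hf : SmoothModP p d f) {m : ℕ} (hm : m ≠ 0) :
    igusaN p d f (m + 1) = igusaN p d f m * p ^ (d - 1) := by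
  have hπ : map (ZMod.powSuccToPow p m) (map (PadicInt.toZModPow (m + 1)) f) =
      map (PadicInt.toZModPow m) f := by
    rw [map_map, PadicInt.zmod_cast_comp_toZModPow _ _ m.le_succ]
  have hρ : map (ZMod.powSuccToSelf p m) (map (PadicInt.toZModPow (m + 1)) f) =
      map PadicInt.toZMod f := by
    rw [map_map, PadicInt.ringHom_eq_toZMod ((ZMod.powSuccToSelf p m).comp _)]
  rw [igusaN, ZMod.natCard_zeros_succ hm (hρ ▸ hf.2), hπ, Fintype.card_fin, igusaN]

theorem count_solutions_smooth_general (p : ℕ) [Fact p.Prime] (d : ℕ)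
    (f : MvPolynomial (Fin d) ℤ_[p]) (hf : SmoothModP p d f)
    (m : ℕ) (hm : 1 ≤ m) :
    igusaN p d f m = igusaN p d f 1 * p ^ ((d - 1) * (m - 1)) := by
  induction m, hm using Nat.le_induction with
  | base => simp
  | succ m hm ih =>
    rw [igusaN_succ hf (by omega), ih, mul_assoc, ← pow_add, Nat.add_sub_cancel,
      ← Nat.mul_add_one, Nat.sub_add_cancel hm]

/-- If the reduction of `f` mod `p` defines a smooth
hypersurface, then `N_m(f) = N_1(f) · p^{(d-1)(m-1)}` for every `m ≥ 1`. -/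
theorem count_solutions_smooth (p : ℕ) [Fact p.Prime] (d : ℕ) (hd : 1 ≤ d)
    (f : MvPolynomial (Fin d) ℤ_[p]) (hf : SmoothModP p d f)
    (m : ℕ) (hm : 1 ≤ m) :
    igusaN p d f m = igusaN p d f 1 * p ^ ((d - 1) * (m - 1)) :=
  count_solutions_smooth_general p d f hf m hm
end

section
/- (Explicit Igusa Poincaré series of the cusp.) Let p be a prime with p ≠ 3, and for each integer m ≥ 1 let N_m = #{(x,y) ∈ (ℤ/p^mℤ)² : y² = x³}. Then in the formal power series ring ℚ[[t]] one has the identity (1 − p t)(1 − p⁷ t⁶) · ∑_{m≥1} N_m t^m = p t + p(p−1) t² + (p−1) p⁶ t⁶ − p⁸ t⁷. -/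
/-!
Split the solutions of `y² = x³` in `ℤ/p^m` according to whether `x` is a unit. Those with `x` a
unit are `(u², u³)` for a unique unit `u`, so there are `φ(p^m) = p^(m-1)(p-1)` of them. If `p ∣ x`,
comparing valuations forces `p^a ∣ x` and `p^b ∣ y`, where `(a, b)` grows to `(2, 3)` once `m ≥ 5`;
these points are the image of the additive map `(X, Y) ↦ (p^a X, p^b Y)`, whose fibres have
`p^(a+b)` elements. For `m ≤ 5` every pair of multiples is a solution, and for `m ≥ 6` the identity
`(p³Y)² - (p²X)³ = p⁶(Y² - X³)` gives `p⁷ N_(m-6)` of them. The recurrence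
`N_(m+6) = p^(m+5)(p-1) + p⁷ N_m` and the initial values are equivalent to the power series
identity.
-/

open PowerSeries

def cuspPoints (R : Type*) [Monoid R] : Set (R × R) := {xy | xy.2 ^ 2 = xy.1 ^ 3}

theorem cuspPoints_inter_isUnit (M : Type*) [CommMonoid M] :
    cuspPoints M ∩ {xy | IsUnit xy.1} =
      Set.range fun u : Mˣ => ((↑(u ^ 2) : M), (↑(u ^ 3) : M)) := by
  ext ⟨x, y⟩
  simp only [cuspPoints, Set.mem_inter_iff, Set.mem_ofPred_eq, Set.mem_range, Prod.mk.injEq]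
  constructor
  · rintro ⟨hxy, ux, rfl⟩
    obtain ⟨uy, rfl⟩ : IsUnit y := (isUnit_pow_iff two_ne_zero).mp (hxy ▸ ux.isUnit.pow 3)
    have h : uy ^ 2 = ux ^ 3 := Units.ext (by push_cast; exact hxy)
    refine ⟨uy * ux⁻¹, ?_, ?_⟩
    · rw [mul_pow, h]; group
    · rw [mul_pow, pow_succ, h, mul_comm (ux ^ 3) uy, mul_assoc, ← mul_pow, mul_inv_cancel,
        one_pow, mul_one]
  · rintro ⟨u, rfl, rfl⟩
    exact ⟨by simp only [Units.val_pow_eq_pow_val, ← pow_mul], (u ^ 2).isUnit⟩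

theorem injective_units_sq_cube (M : Type*) [CommMonoid M] :
    Function.Injective fun u : Mˣ => ((↑(u ^ 2) : M), (↑(u ^ 3) : M)) := by
  intro u v h
  simp only [Prod.mk.injEq, Units.val_inj] at h
  calc u = u ^ 3 * (u ^ 2)⁻¹ := by group
    _ = v ^ 3 * (v ^ 2)⁻¹ := by rw [h.1, h.2]
    _ = v := by group

theorem card_cuspPoints_inter_isUnit (M : Type*) [CommMonoid M] :
    Nat.card ↥(cuspPoints M ∩ {xy | IsUnit xy.1}) = Nat.card Mˣ := by
  rw [cuspPoints_inter_isUnit, Nat.card_range_of_injective (injective_units_sq_cube M)]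

theorem card_cuspPoints_of_subsingleton (M : Type*) [Monoid M] [Subsingleton M] :
    Nat.card (cuspPoints M) = 1 :=
  Nat.card_eq_one_iff_unique.mpr ⟨inferInstance, ⟨⟨(1, 1), Subsingleton.elim _ _⟩⟩⟩

/-- Each fibre over the range is a coset of the kernel, based at the point chosen by `invFun`. -/
noncomputable def AddMonoidHom.preimageEquivProdKer {G H : Type*} [AddGroup G] [AddGroup H]
    (f : G →+ H) (s : Set H) : f ⁻¹' s ≃ ↥(s ∩ Set.range f) × f.ker where
  toFun g := (⟨f g, g.2, g.1, rfl⟩,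
    ⟨-Function.invFun f (f g) + g, by simp [Function.invFun_eq (⟨g, rfl⟩ : ∃ a, f a = f g)]⟩)
  invFun hk := ⟨Function.invFun f hk.1 + hk.2, by
    simp [Function.invFun_eq hk.1.2.2, (AddMonoidHom.mem_ker).mp hk.2.2, hk.1.2.1]⟩
  left_inv g := by ext; simp
  right_inv hk := by
    obtain ⟨⟨_, -, hr⟩, k, hk⟩ := hk
    have hk' : f k = 0 := hk
    ext <;> simp [Function.invFun_eq hr, hk']

theorem AddMonoidHom.card_preimage {G H : Type*} [AddGroup G] [AddGroup H]
    (f : G →+ H) (s : Set H) :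
    Nat.card (f ⁻¹' s) = Nat.card ↥(s ∩ Set.range f) * Nat.card f.ker := by
  rw [Nat.card_congr (f.preimageEquivProdKer s), Nat.card_prod]

theorem AddMonoidHom.card_ker_prodMap {G H G' H' : Type*} [AddGroup G] [AddGroup H] [AddGroup G']
    [AddGroup H'] (f : G →+ H) (g : G' →+ H') :
    Nat.card (f.prodMap g).ker = Nat.card f.ker * Nat.card g.ker := by
  rw [AddMonoidHom.ker_prodMap, Nat.card_congr (AddSubgroup.prodEquiv _ _).toEquiv, Nat.card_prod]

theorem ZMod.natCast_mul_eq_zero_iff {n a d : ℕ} (h : a * d = n) (ha : a ≠ 0) (z : ZMod n) :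
    (a : ZMod n) * z = 0 ↔ ZMod.castHom (Dvd.intro_left a h) (ZMod d) z = 0 := by
  obtain ⟨z, rfl⟩ := ZMod.intCast_surjective z
  rw [map_intCast, ← Int.cast_natCast, ← Int.cast_mul, ZMod.intCast_zmod_eq_zero_iff_dvd,
    ZMod.intCast_zmod_eq_zero_iff_dvd, ← h, Nat.cast_mul]
  exact mul_dvd_mul_iff_left (by exact_mod_cast ha)

theorem ZMod.card_ker_castHom {n a d : ℕ} (h : a * d = n) [NeZero n] :
    Nat.card (ZMod.castHom (Dvd.intro_left a h) (ZMod d)).toAddMonoidHom.ker = a := by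
  have : NeZero d := ⟨right_ne_zero_of_mul (h ▸ NeZero.ne n)⟩
  have hcard :=
    AddSubgroup.card_mul_index (ZMod.castHom (Dvd.intro_left a h) (ZMod d)).toAddMonoidHom.ker
  rw [AddSubgroup.index_ker, AddMonoidHom.range_eq_top.mpr (ZMod.ringHom_surjective _),
    Nat.card_congr AddSubgroup.topEquiv.toEquiv, Nat.card_zmod, Nat.card_zmod] at hcard
  exact Nat.eq_of_mul_eq_mul_right (NeZero.pos d) (hcard.trans h.symm)

theorem ZMod.card_ker_mulLeft {n a d : ℕ} (h : a * d = n) [NeZero n] :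
    Nat.card (AddMonoidHom.mulLeft (a : ZMod n)).ker = a := by
  conv_rhs => rw [← ZMod.card_ker_castHom h]
  congr 2
  ext z
  exact ZMod.natCast_mul_eq_zero_iff h (left_ne_zero_of_mul (h ▸ NeZero.ne n)) z

theorem Prime.dvd_of_pow_succ_dvd_pow_mul_add {R : Type*} [CommRing R] [IsDomain R] {q u w : R}
    {k : ℕ} (hq : Prime q) (h : q ^ (k + 1) ∣ q ^ k * u + q ^ (k + 1) * w) : q ∣ u := by
  have h' := (dvd_add_left (dvd_mul_right _ w)).mp h
  rw [pow_succ] at h'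
  exact (mul_dvd_mul_iff_left (pow_ne_zero k hq.ne_zero)).mp h'

section Valuation

variable {R : Type*} [CommRing R] [IsDomain R] {q x y : R} {m : ℕ}

theorem Prime.cusp_dvd_y (hq : Prime q) (hm : 1 ≤ m) (h : q ^ m ∣ y ^ 2 - x ^ 3) (hx : q ∣ x) :
    q ∣ y := by
  obtain ⟨X, rfl⟩ := hx
  refine hq.dvd_of_dvd_pow (n := 2) (hq.dvd_of_pow_succ_dvd_pow_mul_add (k := 0) (u := y ^ 2)
    (w := -(q ^ 2 * X ^ 3)) ?_)
  convert (pow_dvd_pow q hm).trans h using 1; ring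

theorem Prime.cusp_sq_dvd_y (hq : Prime q) (hm : 3 ≤ m) (h : q ^ m ∣ y ^ 2 - x ^ 3) (hx : q ∣ x) :
    q ^ 2 ∣ y := by
  obtain ⟨Y, rfl⟩ := hq.cusp_dvd_y (by omega) h hx
  obtain ⟨X, rfl⟩ := hx
  obtain ⟨Z, rfl⟩ := hq.dvd_of_dvd_pow (n := 2) (hq.dvd_of_pow_succ_dvd_pow_mul_add (k := 2)
    (u := Y ^ 2) (w := -X ^ 3) (by convert (pow_dvd_pow q hm).trans h using 1; ring))
  exact ⟨Z, by ring⟩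

theorem Prime.cusp_sq_dvd_x (hq : Prime q) (hm : 4 ≤ m) (h : q ^ m ∣ y ^ 2 - x ^ 3) (hx : q ∣ x) :
    q ^ 2 ∣ x := by
  obtain ⟨Y, rfl⟩ := hq.cusp_sq_dvd_y (by omega) h hx
  obtain ⟨X, rfl⟩ := hx
  obtain ⟨Z, rfl⟩ := hq.dvd_of_dvd_pow (n := 3) (dvd_neg.mp (hq.dvd_of_pow_succ_dvd_pow_mul_add
    (k := 3) (u := -X ^ 3) (w := Y ^ 2) (by convert (pow_dvd_pow q hm).trans h using 1; ring)))
  exact ⟨Z, by ring⟩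

theorem Prime.cusp_cube_dvd_y (hq : Prime q) (hm : 5 ≤ m) (h : q ^ m ∣ y ^ 2 - x ^ 3)
    (hx : q ∣ x) : q ^ 3 ∣ y := by
  obtain ⟨X, rfl⟩ := hq.cusp_sq_dvd_x (by omega) h hx
  obtain ⟨Y, rfl⟩ := hq.cusp_sq_dvd_y (by omega) h hx
  obtain ⟨Z, rfl⟩ := hq.dvd_of_dvd_pow (n := 2) (hq.dvd_of_pow_succ_dvd_pow_mul_add (k := 4)
    (u := Y ^ 2) (w := -(q * X ^ 3)) (by convert (pow_dvd_pow q hm).trans h using 1; ring))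
  exact ⟨Z, by ring⟩

end Valuation

/-- With `c = p²` and `d = p³` this is the weighted scaling under which the cusp is homogeneous. -/
def scaleHom {R : Type*} [NonUnitalNonAssocSemiring R] (c d : R) : R × R →+ R × R :=
  (AddMonoidHom.mulLeft c).prodMap (AddMonoidHom.mulLeft d)

theorem mem_range_scaleHom {R : Type*} [NonUnitalSemiring R] {c d : R} {xy : R × R} :
    xy ∈ Set.range (scaleHom c d) ↔ c ∣ xy.1 ∧ d ∣ xy.2 := by
  simp [scaleHom, Dvd.dvd, eq_comm]

section PrimePower

variable {p : ℕ} [hp : Fact p.Prime]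

theorem card_ker_scaleHom_pow {m a b : ℕ} (ha : a ≤ m) (hb : b ≤ m) :
    Nat.card (scaleHom ((p : ZMod (p ^ m)) ^ a) ((p : ZMod (p ^ m)) ^ b)).ker = p ^ a * p ^ b := by
  rw [scaleHom, AddMonoidHom.card_ker_prodMap, ← Nat.cast_pow, ← Nat.cast_pow,
    ZMod.card_ker_mulLeft (by rw [← pow_add, Nat.add_sub_cancel' ha]),
    ZMod.card_ker_mulLeft (by rw [← pow_add, Nat.add_sub_cancel' hb])]

theorem cuspPoints_inter_not_isUnit {m a b : ℕ} (hm : 1 ≤ m) (ha : 1 ≤ a)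
    (H : ∀ x y : ℤ, (p : ℤ) ^ m ∣ y ^ 2 - x ^ 3 → (p : ℤ) ∣ x → (p : ℤ) ^ a ∣ x ∧ (p : ℤ) ^ b ∣ y) :
    cuspPoints (ZMod (p ^ m)) ∩ {xy | ¬IsUnit xy.1} =
      cuspPoints (ZMod (p ^ m)) ∩
        Set.range (scaleHom ((p : ZMod (p ^ m)) ^ a) ((p : ZMod (p ^ m)) ^ b)) := by
  ext ⟨x, y⟩
  simp only [Set.mem_inter_iff, mem_range_scaleHom, Set.mem_ofPred_eq, and_congr_right_iff]
  intro hxy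
  constructor
  · intro hx
    obtain ⟨X, rfl⟩ := ZMod.natCast_zmod_surjective x
    obtain ⟨Y, rfl⟩ := ZMod.natCast_zmod_surjective y
    rw [ZMod.isUnit_natCast_iff_not_dvd_pow hp.out hm, not_not] at hx
    have hdvd : (p : ℤ) ^ m ∣ (Y : ℤ) ^ 2 - (X : ℤ) ^ 3 := by
      rw [← Int.natCast_pow, ← ZMod.intCast_zmod_eq_zero_iff_dvd]
      push_cast
      exact sub_eq_zero.mpr hxy
    obtain ⟨hX, hY⟩ := H X Y hdvd (Int.natCast_dvd_natCast.mpr hx)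
    simpa using And.intro (map_dvd (Int.castRingHom (ZMod (p ^ m))) hX)
      (map_dvd (Int.castRingHom (ZMod (p ^ m))) hY)
  · rintro ⟨hX, -⟩ hx
    exact ZMod.prime_natCast_not_isUnit_pow hp.out hm
      (isUnit_of_dvd_unit ((dvd_pow_self _ (by omega)).trans hX) hx)

theorem card_cuspPoints_eq_add {m a b : ℕ} (hm : 1 ≤ m) (ha : 1 ≤ a)
    (H : ∀ x y : ℤ, (p : ℤ) ^ m ∣ y ^ 2 - x ^ 3 → (p : ℤ) ∣ x → (p : ℤ) ^ a ∣ x ∧ (p : ℤ) ^ b ∣ y) :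
    Nat.card (cuspPoints (ZMod (p ^ m))) = p ^ (m - 1) * (p - 1) +
      Nat.card ↥(cuspPoints (ZMod (p ^ m)) ∩
        Set.range (scaleHom ((p : ZMod (p ^ m)) ^ a) ((p : ZMod (p ^ m)) ^ b))) := by
  rw [Nat.card_coe_set_eq, ← Set.ncard_inter_add_ncard_sdiff_eq_ncard _ {xy | IsUnit xy.1},
    Set.sdiff_eq, Set.compl_ofPred, cuspPoints_inter_not_isUnit hm ha H, ← Nat.card_coe_set_eq,
    card_cuspPoints_inter_isUnit, Nat.card_eq_fintype_card, ZMod.card_units_eq_totient,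
    Nat.totient_prime_pow hp.out (by omega), Nat.card_coe_set_eq]

theorem card_cuspPoints_inter_range_scaleHom_of_le {m a b : ℕ} (ham : a ≤ m) (hbm : b ≤ m)
    (h3a : m ≤ 3 * a) (h2b : m ≤ 2 * b) :
    Nat.card ↥(cuspPoints (ZMod (p ^ m)) ∩
      Set.range (scaleHom ((p : ZMod (p ^ m)) ^ a) ((p : ZMod (p ^ m)) ^ b))) =
      p ^ (m - a) * p ^ (m - b) := by
  have hpre : scaleHom ((p : ZMod (p ^ m)) ^ a) ((p : ZMod (p ^ m)) ^ b) ⁻¹'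
      cuspPoints (ZMod (p ^ m)) = Set.univ := by
    ext ⟨X, Y⟩
    simp [cuspPoints, scaleHom, mul_pow, ← pow_mul, ZMod.natCast_pow_eq_zero_of_le p,
      show m ≤ b * 2 by omega, show m ≤ a * 3 by omega]
  have h := (scaleHom ((p : ZMod (p ^ m)) ^ a) ((p : ZMod (p ^ m)) ^ b)).card_preimage
    (cuspPoints (ZMod (p ^ m)))
  rw [hpre, card_ker_scaleHom_pow ham hbm, Nat.card_univ, Nat.card_prod, Nat.card_zmod] at h
  apply Nat.eq_of_mul_eq_mul_right (by have := hp.out.pos; positivity : 0 < p ^ a * p ^ b)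
  rw [← h]
  simp only [← pow_add]
  congr 1
  omega

theorem card_cuspPoints_inter_range_scaleHom_add_six (m : ℕ) :
    Nat.card ↥(cuspPoints (ZMod (p ^ (m + 6))) ∩
      Set.range (scaleHom ((p : ZMod (p ^ (m + 6))) ^ 2) ((p : ZMod (p ^ (m + 6))) ^ 3))) =
      p ^ 7 * Nat.card (cuspPoints (ZMod (p ^ m))) := by
  have hn : p ^ 6 * p ^ m = p ^ (m + 6) := by ring
  set π := ZMod.castHom (Dvd.intro_left _ hn) (ZMod (p ^ m))
  have hpre : scaleHom ((p : ZMod (p ^ (m + 6))) ^ 2) ((p : ZMod (p ^ (m + 6))) ^ 3) ⁻¹'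
      cuspPoints _ = π.toAddMonoidHom.prodMap π.toAddMonoidHom ⁻¹' cuspPoints (ZMod (p ^ m)) := by
    ext ⟨X, Y⟩
    simp only [Set.mem_preimage, cuspPoints, Set.mem_ofPred_eq, scaleHom,
      AddMonoidHom.coe_prodMap, Prod.map_apply, AddMonoidHom.coe_mulLeft,
      RingHom.toAddMonoidHom_eq_coe, AddMonoidHom.coe_coe]
    rw [← sub_eq_zero, ← sub_eq_zero (a := π Y ^ 2), ← map_pow, ← map_pow, ← map_sub,
      ← ZMod.natCast_mul_eq_zero_iff hn (pow_ne_zero 6 hp.out.ne_zero)]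
    push_cast
    ring_nf
  have h := (scaleHom ((p : ZMod (p ^ (m + 6))) ^ 2) ((p : ZMod (p ^ (m + 6))) ^ 3)).card_preimage
    (cuspPoints _)
  have hsurj : Set.range (π.toAddMonoidHom.prodMap π.toAddMonoidHom) = Set.univ :=
    ((ZMod.ringHom_surjective π).prodMap (ZMod.ringHom_surjective π)).range_eq
  rw [hpre, AddMonoidHom.card_preimage, hsurj, Set.inter_univ, AddMonoidHom.card_ker_prodMap,
    ZMod.card_ker_castHom hn, card_ker_scaleHom_pow (by omega) (by omega)] at h
  apply Nat.eq_of_mul_eq_mul_right (by have := hp.out.pos; positivity : 0 < p ^ 2 * p ^ 3)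
  rw [← h]
  ring

theorem card_cuspPoints_of_le {m a b : ℕ} (ha : 1 ≤ a) (ham : a ≤ m) (hbm : b ≤ m)
    (h3a : m ≤ 3 * a) (h2b : m ≤ 2 * b)
    (H : ∀ x y : ℤ, (p : ℤ) ^ m ∣ y ^ 2 - x ^ 3 → (p : ℤ) ∣ x → (p : ℤ) ^ a ∣ x ∧ (p : ℤ) ^ b ∣ y) :
    Nat.card (cuspPoints (ZMod (p ^ m))) = p ^ (m - 1) * (p - 1) + p ^ (m - a) * p ^ (m - b) := by
  rw [card_cuspPoints_eq_add (by omega) ha H,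
    card_cuspPoints_inter_range_scaleHom_of_le ham hbm h3a h2b]

theorem card_cuspPoints_add_six (m : ℕ) :
    Nat.card (cuspPoints (ZMod (p ^ (m + 6)))) =
      p ^ (m + 5) * (p - 1) + p ^ 7 * Nat.card (cuspPoints (ZMod (p ^ m))) := by
  have hq : Prime (p : ℤ) := Nat.prime_iff_prime_int.mp hp.out
  rw [card_cuspPoints_eq_add (by omega) (by norm_num : 1 ≤ 2)
    (fun x y h hx => ⟨hq.cusp_sq_dvd_x (by omega) h hx, hq.cusp_cube_dvd_y (by omega) h hx⟩),
    card_cuspPoints_inter_range_scaleHom_add_six]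
  rfl

theorem card_cuspPoints_pow_one : Nat.card (cuspPoints (ZMod (p ^ 1))) = p := by
  have hq : Prime (p : ℤ) := Nat.prime_iff_prime_int.mp hp.out
  rw [card_cuspPoints_of_le (a := 1) (b := 1) le_rfl le_rfl le_rfl (by norm_num) (by norm_num)
    (fun x y h hx => ⟨by simpa using hx, by simpa using hq.cusp_dvd_y le_rfl h hx⟩)]
  simp [Nat.sub_add_cancel hp.out.one_le]

theorem card_cuspPoints_of_two_le_of_le_five {m : ℕ} (h2 : 2 ≤ m) (h5 : m ≤ 5) :
    Nat.card (cuspPoints (ZMod (p ^ m))) = p ^ (m - 1) * (p - 1) + p ^ m := by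
  have hq : Prime (p : ℤ) := Nat.prime_iff_prime_int.mp hp.out
  interval_cases m
  · rw [card_cuspPoints_of_le (a := 1) (b := 1) le_rfl (by norm_num) (by norm_num) (by norm_num)
      (by norm_num)
      fun x y h hx => ⟨by simpa using hx, by simpa using hq.cusp_dvd_y (by norm_num) h hx⟩]
    ring
  · rw [card_cuspPoints_of_le (a := 1) (b := 2) le_rfl (by norm_num) (by norm_num) (by norm_num)
      (by norm_num) fun x y h hx => ⟨by simpa using hx, hq.cusp_sq_dvd_y le_rfl h hx⟩]
    ring
  · rw [card_cuspPoints_of_le (a := 2) (b := 2) (by norm_num) (by norm_num) (by norm_num)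
      (by norm_num) (by norm_num)
      fun x y h hx => ⟨hq.cusp_sq_dvd_x le_rfl h hx, hq.cusp_sq_dvd_y (by norm_num) h hx⟩]
    ring
  · rw [card_cuspPoints_of_le (a := 2) (b := 3) (by norm_num) (by norm_num) (by norm_num)
      (by norm_num) (by norm_num)
      fun x y h hx => ⟨hq.cusp_sq_dvd_x (by norm_num) h hx, hq.cusp_cube_dvd_y le_rfl h hx⟩]
    ring

end PrimePower

theorem poincare_series_eq_of_recurrence {R : Type*} [CommRing R] (q : R) (N : ℕ → R)
    (h0 : N 0 = 1) (h1 : N 1 = q)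
    (hsmall : ∀ m, 2 ≤ m → m ≤ 5 → N m = q ^ (m - 1) * (q - 1) + q ^ m)
    (hrec : ∀ m, N (m + 6) = q ^ (m + 5) * (q - 1) + q ^ 7 * N m) :
    (1 - C q * X) * (1 - C (q ^ 7) * X ^ 6) * mk (fun m => if m = 0 then 0 else N m) =
      C q * X + C (q * (q - 1)) * X ^ 2 + C ((q - 1) * q ^ 6) * X ^ 6 - C (q ^ 8) * X ^ 7 := by
  have hfactor : (1 - C q * X) * (1 - C (q ^ 7) * X ^ 6) =
      1 - C q * X ^ 1 - C (q ^ 7) * X ^ 6 + C (q ^ 8) * X ^ 7 := by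
    simp only [map_pow]; ring
  rw [hfactor]
  ext n
  simp only [sub_mul, add_mul, one_mul, mul_assoc, map_add, map_sub, coeff_C_mul, coeff_X_pow_mul',
    coeff_mk, coeff_X_pow, coeff_X]
  rcases n with _ | _ | _ | _ | _ | _ | _ | _ | n
  · simp
  · simp [h1]
  · simp [h1, hsmall]; ring
  · simp [hsmall]; ring
  · simp [hsmall]; ring
  · simp [hsmall]; ring
  · simp [hsmall, h0, hrec 0]; ring
  · simp [h0, h1, hrec 0, hrec 1]; ring
  · have h8 : N (n + 8) = q ^ (n + 7) * (q - 1) + q ^ 7 * N (n + 2) := hrec (n + 2)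
    have h7 : N (n + 7) = q ^ (n + 6) * (q - 1) + q ^ 7 * N (n + 1) := hrec (n + 1)
    simp [h8, h7]; ring

theorem cusp_poincare_series_general (p : ℕ) [Fact p.Prime] :
    (1 - PowerSeries.C (R := ℚ) (p : ℚ) * PowerSeries.X)
        * (1 - PowerSeries.C (R := ℚ) ((p : ℚ) ^ 7) * PowerSeries.X ^ 6)
        * PowerSeries.mk (fun m => if m = 0 then 0 else
            (Nat.card {xy : ZMod (p ^ m) × ZMod (p ^ m) // xy.2 ^ 2 = xy.1 ^ 3} : ℚ))
      = PowerSeries.C (R := ℚ) (p : ℚ) * PowerSeries.X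
          + PowerSeries.C (R := ℚ) ((p : ℚ) * ((p : ℚ) - 1)) * PowerSeries.X ^ 2
          + PowerSeries.C (R := ℚ) (((p : ℚ) - 1) * (p : ℚ) ^ 6) * PowerSeries.X ^ 6
          - PowerSeries.C (R := ℚ) ((p : ℚ) ^ 8) * PowerSeries.X ^ 7 := by
  have hp1 : 1 ≤ p := (Fact.out : p.Prime).one_le
  refine poincare_series_eq_of_recurrence (p : ℚ)
    (fun m => (Nat.card (cuspPoints (ZMod (p ^ m))) : ℚ)) ?_ ?_ ?_ ?_
  · exact_mod_cast card_cuspPoints_of_subsingleton (ZMod 1)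
  · exact_mod_cast card_cuspPoints_pow_one
  · intro m h2 h5
    rw [card_cuspPoints_of_two_le_of_le_five h2 h5]
    push_cast [Nat.cast_sub hp1]
    rfl
  · intro m
    rw [card_cuspPoints_add_six]
    push_cast [Nat.cast_sub hp1]
    rfl

/-- (Explicit Igusa Poincaré series of the cusp `y² = x³`.)
For a prime `p ≠ 3`, with `N_m = #{(x,y) ∈ (ℤ/p^mℤ)² : y² = x³}`, one has
`(1 - pt)(1 - p⁷t⁶) ∑_{m≥1} N_m t^m = pt + p(p-1)t² + (p-1)p⁶t⁶ - p⁸t⁷`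
in `ℚ[[t]]`. -/
theorem cusp_poincare_series (p : ℕ) [Fact p.Prime] (hp3 : p ≠ 3) :
    (1 - PowerSeries.C (R := ℚ) (p : ℚ) * PowerSeries.X)
        * (1 - PowerSeries.C (R := ℚ) ((p : ℚ) ^ 7) * PowerSeries.X ^ 6)
        * PowerSeries.mk (fun m => if m = 0 then 0 else
            (Nat.card {xy : ZMod (p ^ m) × ZMod (p ^ m) // xy.2 ^ 2 = xy.1 ^ 3} : ℚ))
      = PowerSeries.C (R := ℚ) (p : ℚ) * PowerSeries.X
          + PowerSeries.C (R := ℚ) ((p : ℚ) * ((p : ℚ) - 1)) * PowerSeries.X ^ 2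
          + PowerSeries.C (R := ℚ) (((p : ℚ) - 1) * (p : ℚ) ^ 6) * PowerSeries.X ^ 6
          - PowerSeries.C (R := ℚ) ((p : ℚ) ^ 8) * PowerSeries.X ^ 7 :=
  cusp_poincare_series_general p
end

section
/- (Solvability criterion for a cube equal to a square modulo p^m.) Let p be a prime with p ≠ 3, let m ≥ 1 be an integer, and let a be a nonzero integer. Then there exists an integer y with y³ ≡ a² (mod p^m) if and only if either (1) 2·v_p(a) ≥ m, or (2) 2·v_p(a) < m, 3 divides v_p(a), and the reduced angular component ac_p(a²) = (ac_p(a))² is a cube in F_p, i.e. there exists u ∈ F_p with u³ = ac_p(a)². -/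
/-!
Write `a = p ^ v * b` with `p ∤ b`, so that `ac_p(a) = b mod p`. If `m ≤ 2v`, then `a² ≡ 0`
and `y = 0` is a solution. Otherwise, writing `y = p ^ w * c` with `p ∤ c`, the two terms of
`p ^ (2v) * b² - p ^ (3w) * c³` can only cancel modulo `p ^ (2v + 1)` if `2v = 3w` and
`c³ ≡ b² (mod p)`. Conversely, as `p ≠ 3`, a cube root of `b²` modulo `p` is a simple root of
`X³ - b²`, so Hensel's lemma lifts it to a root `z ∈ ℤ_p`, and `y = p ^ (2v/3) * t` solves the
congruence modulo `p ^ m` for any integer `t ≡ z (mod p ^ m)`.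
-/

/-- The reduced angular component `ac_p(a) ∈ F_p` of a nonzero integer `a`:
the reduction modulo `p` of `a · p^{-v_p(a)}`. -/
def angularComponent (p : ℕ) (a : ℤ) : ZMod p :=
  ((a / (p : ℤ) ^ (padicValInt p a) : ℤ) : ZMod p)

open Polynomial

namespace PadicInt

variable {p : ℕ} [Fact p.Prime]

theorem norm_lt_one_iff_toZMod_eq_zero (z : ℤ_[p]) : ‖z‖ < 1 ↔ toZMod z = 0 := by
  rw [← mem_nonunits, ← IsLocalRing.mem_maximalIdeal, ← ker_toZMod, RingHom.mem_ker]

theorem norm_eq_one_of_toZMod_ne_zero {z : ℤ_[p]} (hz : toZMod z ≠ 0) : ‖z‖ = 1 :=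
  (norm_le_one z).antisymm (not_lt.mp ((norm_lt_one_iff_toZMod_eq_zero z).not.mpr hz))

theorem exists_pow_eq_of_toZMod_pow_eq {n : ℕ} (hn : (n : ZMod p) ≠ 0) {x : ℤ_[p]}
    (hx : toZMod x ≠ 0) {u : ZMod p} (hu : u ^ n = toZMod x) : ∃ z : ℤ_[p], z ^ n = x := by
  have hn0 : n ≠ 0 := by rintro rfl; exact hn Nat.cast_zero
  obtain ⟨z₀, rfl⟩ := ZMod.ringHom_surjective toZMod u
  have hz₀ : toZMod z₀ ≠ 0 := fun h => hx (by rw [← hu, h, zero_pow hn0])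
  have hroot : ‖(X ^ n - C x).aeval z₀‖ < 1 := by
    simp [norm_lt_one_iff_toZMod_eq_zero, hu]
  have hsimple : ‖(X ^ n - C x).derivative.aeval z₀‖ = 1 := by
    refine norm_eq_one_of_toZMod_ne_zero ?_
    simp [derivative_X_pow, hn, hz₀]
  obtain ⟨z, hz, -⟩ :=
    hensels_lemma (F := X ^ n - C x) (a := z₀) (by rwa [hsimple, one_pow])
  exact ⟨z, by simpa [sub_eq_zero] using hz⟩

end PadicInt

section Divisibility

variable {R : Type*} [CommRing R] [IsDomain R] {p : R}

theorem not_pow_succ_dvd_pow_mul (hp : p ≠ 0) {b : R} (hb : ¬p ∣ b) (i : ℕ) :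
    ¬p ^ (i + 1) ∣ p ^ i * b := by
  rwa [pow_succ, mul_dvd_mul_iff_left (pow_ne_zero i hp)]

theorem eq_and_dvd_sub_of_pow_succ_dvd_sub (hp : p ≠ 0) {b c : R} (hb : ¬p ∣ b)
    (hc : ¬p ∣ c) {i j : ℕ} (h : p ^ (min i j + 1) ∣ p ^ i * b - p ^ j * c) :
    i = j ∧ p ∣ b - c := by
  wlog hij : i ≤ j generalizing b c i j
  · obtain ⟨hji, hcb⟩ := this hc hb (by rwa [min_comm, ← dvd_neg, neg_sub]) (by omega)
    exact ⟨hji.symm, by rwa [← dvd_neg, neg_sub]⟩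
  obtain ⟨k, rfl⟩ := Nat.exists_eq_add_of_le hij
  rw [min_eq_left hij, pow_succ, pow_add p i k, mul_assoc, ← mul_sub,
    mul_dvd_mul_iff_left (pow_ne_zero i hp)] at h
  cases k with
  | zero => simpa using h
  | succ k =>
    exact absurd ((dvd_sub_left (dvd_mul_of_dvd_left (dvd_pow_self p k.succ_ne_zero) c)).mp h) hb

end Divisibility

theorem intCast_pow_eq_zero_of_le_mul_padicValInt {p : ℕ} (a : ℤ) {k m : ℕ}
    (h : m ≤ k * padicValInt p a) : (a : ZMod (p ^ m)) ^ k = 0 := by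
  rw [← Int.cast_pow, ZMod.intCast_zmod_eq_zero_iff_dvd, Nat.cast_pow]
  exact (pow_dvd_pow _ h).trans
    (pow_mul' (p : ℤ) k _ ▸ pow_dvd_pow_of_dvd (padicValInt_dvd a) k)

section AngularComponent

variable {p : ℕ} [Fact p.Prime]

theorem exists_eq_pow_padicValInt_mul {a : ℤ} (ha : a ≠ 0) :
    ∃ b : ℤ, a = (p : ℤ) ^ padicValInt p a * b ∧ ¬(p : ℤ) ∣ b ∧
      angularComponent p a = b := by
  have hab : (p : ℤ) ^ padicValInt p a * (a / (p : ℤ) ^ padicValInt p a) = a :=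
    Int.mul_ediv_cancel' (padicValInt_dvd a)
  refine ⟨_, hab.symm, ?_, rfl⟩
  rintro ⟨d, hd⟩
  rw [hd] at hab
  have : (p : ℤ) ^ (padicValInt p a + 1) ∣ a :=
    ⟨d, by rw [pow_succ, mul_assoc]; exact hab.symm⟩
  rcases (padicValInt_dvd_iff _ a).mp this with h | h
  · exact ha h
  · omega

theorem mul_padicValInt_eq_and_angularComponent_pow_eq {a y : ℤ} (ha : a ≠ 0) {k l m : ℕ}
    (hl : l ≠ 0) (hm : k * padicValInt p a < m)
    (h : (y : ZMod (p ^ m)) ^ l = (a : ZMod (p ^ m)) ^ k) :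
    l * padicValInt p y = k * padicValInt p a ∧
      angularComponent p y ^ l = angularComponent p a ^ k := by
  have hp : Prime (p : ℤ) := Nat.prime_iff_prime_int.mp Fact.out
  have hdvd : (p : ℤ) ^ m ∣ a ^ k - y ^ l := by
    have := (ZMod.intCast_eq_intCast_iff_dvd_sub (y ^ l) (a ^ k) (p ^ m)).mp
      (by push_cast; exact h)
    exact_mod_cast this
  obtain ⟨b, hab, hb, hacb⟩ := exists_eq_pow_padicValInt_mul (p := p) ha
  have hbk : ¬(p : ℤ) ∣ b ^ k := fun h => hb (hp.dvd_of_dvd_pow h)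
  have hy0 : y ≠ 0 := by
    rintro rfl
    refine not_pow_succ_dvd_pow_mul hp.ne_zero hbk _ ((pow_dvd_pow _ hm).trans ?_)
    rwa [zero_pow hl, sub_zero, hab, mul_pow, ← pow_mul'] at hdvd
  obtain ⟨c, hyc, hc, hacc⟩ := exists_eq_pow_padicValInt_mul (p := p) hy0
  have hcl : ¬(p : ℤ) ∣ c ^ l := fun h => hc (hp.dvd_of_dvd_pow h)
  rw [hab, hyc, mul_pow, mul_pow, ← pow_mul', ← pow_mul'] at hdvd
  obtain ⟨hvw, hbc⟩ := eq_and_dvd_sub_of_pow_succ_dvd_sub hp.ne_zero hbk hcl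
    ((pow_dvd_pow _ (by omega)).trans hdvd)
  refine ⟨hvw.symm, ?_⟩
  rw [hacb, hacc]
  exact_mod_cast (ZMod.intCast_eq_intCast_iff_dvd_sub (c ^ l) (b ^ k) p).mpr hbc

theorem exists_intCast_pow_eq_intCast_pow {a : ℤ} (ha : a ≠ 0) {k l : ℕ}
    (hl : (l : ZMod p) ≠ 0) (hkl : l ∣ k * padicValInt p a) {u : ZMod p}
    (hu : u ^ l = angularComponent p a ^ k) (m : ℕ) :
    ∃ y : ℤ, (y : ZMod (p ^ m)) ^ l = (a : ZMod (p ^ m)) ^ k := by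
  obtain ⟨b, hab, hb, hacb⟩ := exists_eq_pow_padicValInt_mul (p := p) ha
  obtain ⟨j, hj⟩ := hkl
  have hbk : PadicInt.toZMod ((b : ℤ_[p]) ^ k) = angularComponent p a ^ k := by
    rw [map_pow, map_intCast, hacb]
  have hb0 : angularComponent p a ≠ 0 := by
    rwa [hacb, Ne, ZMod.intCast_zmod_eq_zero_iff_dvd]
  obtain ⟨z, hz⟩ := PadicInt.exists_pow_eq_of_toZMod_pow_eq hl
    (hbk ▸ pow_ne_zero k hb0) (hu.trans hbk.symm)
  obtain ⟨c, hc⟩ := ZMod.intCast_surjective (PadicInt.toZModPow m z)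
  refine ⟨(p : ℤ) ^ j * c, ?_⟩
  calc (((p : ℤ) ^ j * c : ℤ) : ZMod (p ^ m)) ^ l
      = (p : ZMod (p ^ m)) ^ (l * j) * (c : ZMod (p ^ m)) ^ l := by push_cast; ring
    _ = (p : ZMod (p ^ m)) ^ (k * padicValInt p a) * (b : ZMod (p ^ m)) ^ k := by
      rw [hc, ← map_pow, hz, map_pow, map_intCast, hj]
    _ = (a : ZMod (p ^ m)) ^ k := by
      conv_rhs => rw [hab]
      push_cast; ring

end AngularComponent

theorem cube_eq_square_solvable_general (p : ℕ) [Fact p.Prime] (hp3 : p ≠ 3)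
    (m : ℕ) (a : ℤ) (ha : a ≠ 0) :
    (∃ y : ℤ, ((y : ZMod (p ^ m))) ^ 3 = ((a : ZMod (p ^ m))) ^ 2) ↔
      (m ≤ 2 * padicValInt p a ∨
        (2 * padicValInt p a < m ∧ 3 ∣ padicValInt p a ∧
          ∃ u : ZMod p, u ^ 3 = (angularComponent p a) ^ 2)) := by
  constructor
  · rintro ⟨y, hy⟩
    refine or_iff_not_imp_left.mpr fun hlt => ?_
    push Not at hlt
    obtain ⟨hv, hu⟩ :=
      mul_padicValInt_eq_and_angularComponent_pow_eq ha three_ne_zero hlt hy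
    exact ⟨hlt, by omega, _, hu⟩
  · rintro (hle | ⟨-, h3, u, hu⟩)
    · exact ⟨0, by rw [Int.cast_zero, zero_pow three_ne_zero,
        intCast_pow_eq_zero_of_le_mul_padicValInt a hle]⟩
    · have h3p : ((3 : ℕ) : ZMod p) ≠ 0 := by
        rw [Ne, ZMod.natCast_eq_zero_iff]
        exact fun h => hp3 ((Nat.prime_dvd_prime_iff_eq Fact.out Nat.prime_three).mp h)
      exact exists_intCast_pow_eq_intCast_pow ha h3p (dvd_mul_of_dvd_right h3 2) hu m

/-- (Solvability criterion for `y³ ≡ a² (mod p^m)`.)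
Let `p ≠ 3` be a prime, `m ≥ 1`, and `a` a nonzero integer.  Then
`y³ ≡ a² (mod p^m)` has an integer solution iff either `2 v_p(a) ≥ m`, or
`2 v_p(a) < m`, `3 ∣ v_p(a)`, and `ac_p(a)²` is a cube in `F_p`. -/
theorem cube_eq_square_solvable (p : ℕ) [Fact p.Prime] (hp3 : p ≠ 3)
    (m : ℕ) (hm : 1 ≤ m) (a : ℤ) (ha : a ≠ 0) :
    (∃ y : ℤ, ((y : ZMod (p ^ m))) ^ 3 = ((a : ZMod (p ^ m))) ^ 2) ↔
      (m ≤ 2 * padicValInt p a ∨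
        (2 * padicValInt p a < m ∧ 3 ∣ padicValInt p a ∧
          ∃ u : ZMod p, u ^ 3 = (angularComponent p a) ^ 2)) :=
  cube_eq_square_solvable_general p hp3 m a ha
end

section
/- (Count of cube roots of a square modulo p^m in the generic case.) Let p be a prime with p ≠ 3, let a be a nonzero integer whose p-adic valuation equals 3ω for some integer ω ≥ 0, and let m be an integer with m > 6ω. Then the number of y ∈ ℤ/p^mℤ with y³ = a² in ℤ/p^mℤ equals r · p^{4ω}, where r = #{u ∈ F_p : u³ = ac_p(a)²}. -/
open Function

theorem AddMonoidHom.card_preimage_of_surjective {A B : Type*} [AddGroup A] [AddGroup B]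
    (f : A →+ B) (hf : Surjective f) (t : Set B) :
    Nat.card (f ⁻¹' t) = Nat.card f.ker * Nat.card t := by
  set e := QuotientAddGroup.quotientKerEquivOfSurjective f hf
  rw [show f ⁻¹' t = QuotientAddGroup.mk ⁻¹' (e ⁻¹' t) from rfl,
    Nat.card_congr (QuotientAddGroup.preimageMkEquivAddSubgroupProdSet _ _), Nat.card_prod,
    Nat.card_preimage_of_injective e.injective (by simp [e.surjective.range_eq])]

theorem add_pow_of_sq_eq_zero {R : Type*} [CommRing R] (n : ℕ) (z t : R) (ht : t ^ 2 = 0) :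
    (z + t) ^ n = z ^ n + n * z ^ (n - 1) * t := by
  simpa [Polynomial.derivative_X_pow] using
    Polynomial.eval_add_of_sq_eq_zero (Polynomial.X ^ n) z t ht

/-- Hensel's lemma for `n`-th roots: moving `z` by `t ∈ ker f` changes `z ^ n` by exactly
`n z ^ (n - 1) t`, and this derivative is a unit, so every root modulo `ker f` lifts uniquely. -/
theorem RingHom.card_pow_eq_of_ker_sq_eq_zero {R S : Type*} [CommRing R] [CommRing S]
    (f : R →+* S) (hf : Surjective f) (hker : ∀ t ∈ RingHom.ker f, t ^ 2 = 0)
    {n : ℕ} (hn : IsUnit (n : R)) {c : R} (hc : IsUnit c) :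
    Nat.card {z : R // z ^ n = c} = Nat.card {w : S // w ^ n = f c} := by
  have hderiv : ∀ z : R, f (z ^ n) = f c → IsUnit (n * z ^ (n - 1) : R) := by
    intro z hz
    have hs : z ^ n - c ∈ RingHom.ker f := by simp [RingHom.mem_ker, hz]
    have hzn : IsUnit (z ^ n) := by
      simpa using (show IsNilpotent (z ^ n - c) from ⟨2, hker _ hs⟩).isUnit_add_left_of_commute
        hc (Commute.all _ _)
    refine hn.mul ?_
    rcases n with _ | n
    · simp
    · exact isUnit_of_mul_isUnit_left (by rwa [← pow_succ])
  refine Nat.card_congr (Equiv.ofBijective (fun z => ⟨f z, by rw [← map_pow, z.2]⟩) ⟨?_, ?_⟩)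
  · rintro ⟨z, hz⟩ ⟨z', hz'⟩ h
    obtain h : f z = f z' := congrArg Subtype.val h
    have ht : z' - z ∈ RingHom.ker f := by rw [RingHom.mem_ker, map_sub, h, sub_self]
    have hlin : (n * z ^ (n - 1) : R) * (z' - z) = 0 := by
      have := add_pow_of_sq_eq_zero n z (z' - z) (hker _ ht)
      rw [add_sub_cancel, hz, hz'] at this
      linear_combination -this
    exact Subtype.ext (sub_eq_zero.1 ((hderiv z (by rw [hz])).mul_right_eq_zero.1 hlin)).symm
  · rintro ⟨w, hw⟩
    obtain ⟨z, rfl⟩ := hf w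
    have hs : z ^ n - c ∈ RingHom.ker f := by simp [RingHom.mem_ker, hw]
    obtain ⟨u, hu⟩ := hderiv z (by rw [map_pow, hw])
    set t := -(↑u⁻¹ * (z ^ n - c)) with ht
    have htker : t ∈ RingHom.ker f := (RingHom.ker f).neg_mem ((RingHom.ker f).mul_mem_left _ hs)
    refine ⟨⟨z + t, ?_⟩, Subtype.ext ?_⟩
    · rw [add_pow_of_sq_eq_zero n z t (hker _ htker), ← hu, ht, mul_neg, ← mul_assoc,
        u.mul_inv, one_mul]
      ring
    · simp [RingHom.mem_ker.1 htker]

theorem not_dvd_div_pow_padicValInt {p : ℕ} [Fact p.Prime] {a : ℤ} (ha : a ≠ 0) :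
    ¬ (p : ℤ) ∣ a / p ^ padicValInt p a := by
  rintro ⟨e, he⟩
  have : (p : ℤ) ^ (padicValInt p a + 1) ∣ a := ⟨e, by
    rw [pow_succ, mul_assoc, ← he, Int.mul_ediv_cancel' (padicValInt_dvd a)]⟩
  rcases (padicValInt_dvd_iff _ a).1 this with h | h
  · exact ha h
  · omega

def ZMod.mulLeftHom (q M : ℕ) : ZMod M →+ ZMod (q * M) :=
  ZMod.lift M ⟨(Int.castAddHom _).comp (AddMonoidHom.mulLeft (q : ℤ)), by
    show ((q * M : ℤ) : ZMod (q * M)) = 0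
    exact_mod_cast ZMod.natCast_self (q * M)⟩

namespace ZMod

section Scaling

variable {q : ℕ}

@[simp]
theorem mulLeftHom_intCast {M : ℕ} (W : ℤ) :
    mulLeftHom q M W = ((q * W : ℤ) : ZMod (q * M)) := by
  simp [mulLeftHom]

theorem mulLeftHom_injective [NeZero q] {M : ℕ} : Injective (mulLeftHom q M) := by
  refine (injective_iff_map_eq_zero _).2 fun w hw => ?_
  obtain ⟨W, rfl⟩ := intCast_surjective w
  rw [mulLeftHom_intCast, intCast_zmod_eq_zero_iff_dvd, Nat.cast_mul] at hw
  rw [intCast_zmod_eq_zero_iff_dvd]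
  exact (mul_dvd_mul_iff_left (by exact_mod_cast NeZero.ne q)).1 hw

theorem intCast_mul_pow_eq_iff [NeZero q] (N n : ℕ) (W c : ℤ) :
    ((q * W : ℤ) : ZMod (q * (q ^ n * N))) ^ (n + 1) = q ^ (n + 1) * c ↔
      (W : ZMod N) ^ (n + 1) = c := by
  have hq : (q : ℤ) ^ (n + 1) ≠ 0 := pow_ne_zero _ (by exact_mod_cast NeZero.ne q)
  rw [← Int.cast_pow, ← Int.cast_pow,
    show (q : ZMod (q * (q ^ n * N))) ^ (n + 1) * (c : ZMod _) = ((q ^ (n + 1) * c : ℤ) : ZMod _) by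
      push_cast; ring,
    intCast_eq_intCast_iff_dvd_sub, intCast_eq_intCast_iff_dvd_sub,
    show (q ^ (n + 1) * c - (q * W) ^ (n + 1) : ℤ) = q ^ (n + 1) * (c - W ^ (n + 1)) by ring]
  push_cast
  rw [show (q : ℤ) * (q ^ n * N) = q ^ (n + 1) * N by ring, mul_dvd_mul_iff_left hq]

theorem card_pow_eq_pow_mul_intCast [NeZero q] (N n : ℕ) (c : ℤ) :
    Nat.card {y : ZMod (q * (q ^ n * N)) // y ^ (n + 1) = q ^ (n + 1) * c}
      = Nat.card {w : ZMod (q ^ n * N) //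
          castHom (dvd_mul_left N (q ^ n)) (ZMod N) w ^ (n + 1) = c} := by
  have hroot : ∀ w : ZMod (q ^ n * N), mulLeftHom q _ w ^ (n + 1) = q ^ (n + 1) * c ↔
      castHom (dvd_mul_left N (q ^ n)) (ZMod N) w ^ (n + 1) = c := by
    intro w
    obtain ⟨W, rfl⟩ := intCast_surjective w
    rw [mulLeftHom_intCast, map_intCast, intCast_mul_pow_eq_iff]
  refine (Nat.card_congr (Equiv.ofBijective (fun w => ⟨mulLeftHom q _ w, (hroot w).2 w.2⟩)
    ⟨fun w w' h => Subtype.ext (mulLeftHom_injective (congrArg Subtype.val h)), ?_⟩)).symm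
  rintro ⟨y, hy⟩
  obtain ⟨Y, rfl⟩ := intCast_surjective y
  obtain ⟨W, rfl⟩ : (q : ℤ) ∣ Y := by
    have h := (intCast_eq_intCast_iff_dvd_sub (Y ^ (n + 1)) (q ^ (n + 1) * c)
      (q * (q ^ n * N))).1 (by push_cast; exact hy)
    rw [← UniqueFactorizationMonoid.pow_dvd_pow_iff_dvd n.add_one_ne_zero,
      ← dvd_sub_right (dvd_mul_right _ c)]
    exact (Dvd.intro (N : ℤ) (by push_cast; ring)).trans h
  exact ⟨⟨W, (hroot W).1 (by simpa using hy)⟩, Subtype.ext (by simp)⟩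

end Scaling

theorem card_castHom_preimage (d N : ℕ) [NeZero N] (P : ZMod N → Prop) :
    Nat.card {w : ZMod (d * N) // P (castHom (dvd_mul_left N d) (ZMod N) w)}
      = Nat.card {u // P u} * d := by
  set f := (castHom (dvd_mul_left N d) (ZMod N)).toAddMonoidHom
  have hf : Surjective f := castHom_surjective (dvd_mul_left N d)
  have hker : Nat.card f.ker = d := by
    have := f.card_preimage_of_surjective hf Set.univ
    rw [Set.preimage_univ, Nat.card_univ, Nat.card_univ, Nat.card_zmod, Nat.card_zmod] at this
    exact Nat.eq_of_mul_eq_mul_right (NeZero.pos N) this.symm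
  exact (f.card_preimage_of_surjective hf {u | P u}).trans (by rw [hker, mul_comm]; rfl)

theorem sq_eq_zero_of_castHom_eq_zero {m n : ℕ} (h : m ∣ n) (hn : n ∣ m ^ 2) {t : ZMod n}
    (ht : castHom h (ZMod m) t = 0) : t ^ 2 = 0 := by
  obtain ⟨T, rfl⟩ := intCast_surjective t
  rw [map_intCast, intCast_zmod_eq_zero_iff_dvd] at ht
  rw [← Int.cast_pow, intCast_zmod_eq_zero_iff_dvd]
  exact (Int.natCast_dvd_natCast.2 hn).trans (by push_cast; exact pow_dvd_pow_of_dvd ht 2)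

theorem isUnit_intCast_of_not_dvd {p : ℕ} (hp : p.Prime) {x : ℤ} (hx : ¬ (p : ℤ) ∣ x)
    (j : ℕ) : IsUnit (x : ZMod (p ^ j)) := by
  have hcop : IsCoprime x ((p ^ j : ℕ) : ℤ) := by
    push_cast
    exact ((Nat.prime_iff_prime_int.mp hp).coprime_iff_not_dvd.2 hx).symm.pow_right
  exact .of_mul_eq_one _ (coe_int_mul_inv_eq_one hcop)

theorem card_pow_eq_intCast_prime_pow {p : ℕ} (hp : p.Prime) {n : ℕ} (hn : ¬ p ∣ n) {c : ℤ}
    (hc : ¬ (p : ℤ) ∣ c) {k : ℕ} (hk : 1 ≤ k) :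
    Nat.card {z : ZMod (p ^ k) // z ^ n = c} = Nat.card {u : ZMod p // u ^ n = c} := by
  induction k, hk using Nat.le_induction with
  | base => rw [pow_one]
  | succ k hk ih =>
    have h : p ^ k ∣ p ^ (k + 1) := pow_dvd_pow p k.le_succ
    rw [← ih]
    simpa using (castHom h (ZMod (p ^ k))).card_pow_eq_of_ker_sq_eq_zero (castHom_surjective h)
      (fun t => sq_eq_zero_of_castHom_eq_zero h (by rw [← pow_mul]; exact pow_dvd_pow p (by omega)))
      (by simpa using isUnit_intCast_of_not_dvd hp (Int.natCast_dvd_natCast.not.2 hn) (k + 1))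
      (isUnit_intCast_of_not_dvd hp hc (k + 1))

end ZMod

/-- (Count of cube roots of a square modulo `p^m` in the
generic case.)  Let `p ≠ 3` be a prime and `a` a nonzero integer with
`v_p(a) = 3ω`.  Then for `m > 6ω`, the number of `y ∈ ℤ/p^mℤ` with `y³ = a²` is
`r · p^{4ω}`, where `r = #{u ∈ F_p : u³ = ac_p(a)²}`. -/
theorem cube_roots_of_square_count (p : ℕ) [Fact p.Prime] (hp3 : p ≠ 3)
    (a : ℤ) (ha : a ≠ 0) (ω : ℕ) (hv : padicValInt p a = 3 * ω)
    (m : ℕ) (hm : 6 * ω < m) :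
    Nat.card {y : ZMod (p ^ m) // y ^ 3 = ((a : ZMod (p ^ m))) ^ 2}
      = Nat.card {u : ZMod p // u ^ 3 = (angularComponent p a) ^ 2} * p ^ (4 * ω) := by
  have hp : p.Prime := Fact.out
  obtain ⟨k, hk, rfl⟩ : ∃ k, 1 ≤ k ∧ m = 6 * ω + k := ⟨m - 6 * ω, by omega, by omega⟩
  set b := a / (p : ℤ) ^ (3 * ω)
  have hab : a = p ^ (3 * ω) * b := (Int.mul_ediv_cancel' (hv ▸ padicValInt_dvd a)).symm
  have hb : ¬ (p : ℤ) ∣ b ^ 2 := by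
    have := not_dvd_div_pow_padicValInt (p := p) ha
    rw [hv] at this
    exact fun h => this ((Nat.prime_iff_prime_int.mp hp).dvd_of_dvd_pow h)
  have hac : angularComponent p a = b := by rw [angularComponent, hv]
  set q := p ^ (2 * ω)
  have hsq : (a : ZMod (q * (q ^ 2 * p ^ k))) ^ 2
      = (q : ZMod (q * (q ^ 2 * p ^ k))) ^ (2 + 1) * ((b ^ 2 : ℤ) : ZMod _) := by
    rw [hab]; push_cast [q]; ring
  calc Nat.card {y : ZMod (p ^ (6 * ω + k)) // y ^ 3 = (a : ZMod (p ^ (6 * ω + k))) ^ 2}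
      = Nat.card {y : ZMod (q * (q ^ 2 * p ^ k)) //
          y ^ (2 + 1) = (q : ZMod (q * (q ^ 2 * p ^ k))) ^ (2 + 1) * ((b ^ 2 : ℤ) : ZMod _)} := by
        rw [show p ^ (6 * ω + k) = q * (q ^ 2 * p ^ k) by ring, hsq]
    _ = Nat.card {u : ZMod (p ^ k) // u ^ 3 = ((b ^ 2 : ℤ) : ZMod _)} * q ^ 2 := by
        rw [ZMod.card_pow_eq_pow_mul_intCast]
        exact ZMod.card_castHom_preimage (q ^ 2) (p ^ k)
          (fun u => u ^ (2 + 1) = ((b ^ 2 : ℤ) : ZMod _))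
    _ = _ := by
        have hp3' : ¬ p ∣ 3 := fun h => hp3 ((Nat.prime_dvd_prime_iff_eq hp Nat.prime_three).1 h)
        rw [ZMod.card_pow_eq_intCast_prime_pow hp hp3' hb hk, hac, Int.cast_pow, ← pow_mul,
          show 2 * ω * 2 = 4 * ω by ring]
end
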